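/- arXiv:2601.16104 — 6 statements merged into one kernel-verified Lean document; each statement's English description precedes it below -/
import Mathlib

section
/- Let u and v be two distinct vertices of a 2-edge-connected graph G. Then there is a circuit chain of G connecting u and v. -/
open Classical

noncomputable section

/-- A multigraph with vertex type `V` and edge type `E`, possibly with parallel
edges but without loops.  Each edge carries a fixed reference orientation given
by `ends`; an (oriented) flow is represented by its values with respect to the
reference orientations, and reorienting an edge corresponds to negating its
value. -/
structure Multigraph (V E : Type) where
  ends : E → V × V
  no_loops : ∀ e, (ends e).1 ≠ (ends e).2

namespace Multigraph

variable {V E : Type}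

/-- `v` is an endvertex of the edge `e`. -/
def incident (G : Multigraph V E) (v : V) (e : E) : Prop :=
  (G.ends e).1 = v ∨ (G.ends e).2 = v

/-- Two edges are adjacent if they are distinct and share an endvertex. -/
def Adjacent (G : Multigraph V E) (e f : E) : Prop :=
  e ≠ f ∧ ∃ v, G.incident v e ∧ G.incident v f

/-- An `A`-flow: at every vertex the sum of the values on incoming edges equals
the sum of the values on outgoing edges (with respect to the reference
orientations). -/
def IsFlow {A : Type} [AddCommGroup A] [Fintype E] (G : Multigraph V E) (φ : E → A) : Prop :=
  ∀ v : V, (∑ e : E, if (G.ends e).2 = v then φ e else 0) =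
    ∑ e : E, if (G.ends e).1 = v then φ e else 0

/-- A rich `k`-flow: a nowhere-zero integer flow with `|φ e| < k` in which
adjacent edges receive distinct absolute values. -/
def IsRichFlow [Fintype E] (G : Multigraph V E) (k : ℤ) (φ : E → ℤ) : Prop :=
  G.IsFlow φ ∧ (∀ e, φ e ≠ 0) ∧ (∀ e, |φ e| < k) ∧
    ∀ e f, G.Adjacent e f → |φ e| ≠ |φ f|

/-- One-step adjacency between vertices using an edge outside `S`. -/
def adjVia (G : Multigraph V E) (S : Set E) (u v : V) : Prop :=
  ∃ e, e ∉ S ∧ (G.ends e = (u, v) ∨ G.ends e = (v, u))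

/-- `u` and `v` are joined by a walk avoiding all edges of `S`. -/
def ReachableAvoiding (G : Multigraph V E) (S : Set E) (u v : V) : Prop :=
  Relation.ReflTransGen (G.adjVia S) u v

/-- An edge is a bridge if its removal disconnects its endvertices. -/
def IsBridge (G : Multigraph V E) (e : E) : Prop :=
  ¬ G.ReachableAvoiding {e} (G.ends e).1 (G.ends e).2

def Bridgeless (G : Multigraph V E) : Prop := ∀ e, ¬ G.IsBridge e

/-- `{e₁, e₂}` is a 2-edge-cut: the edges are distinct, neither is a bridge,
and removing both disconnects some pair of vertices that were connected. -/
def IsTwoEdgeCut (G : Multigraph V E) (e₁ e₂ : E) : Prop :=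
  e₁ ≠ e₂ ∧ ¬ G.IsBridge e₁ ∧ ¬ G.IsBridge e₂ ∧
    ∃ u v : V, G.ReachableAvoiding ∅ u v ∧ ¬ G.ReachableAvoiding {e₁, e₂} u v

/-- A graph is rich flow admissible if it is bridgeless and no two edges
forming a 2-edge-cut are incident with a common vertex. -/
def RichFlowAdmissible (G : Multigraph V E) : Prop :=
  G.Bridgeless ∧
    ∀ e₁ e₂, G.IsTwoEdgeCut e₁ e₂ → ¬ ∃ v, G.incident v e₁ ∧ G.incident v e₂

/-- Edge-connectivity at least `k`: removing fewer than `k` edges leaves all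
vertices pairwise connected. -/
def EdgeConnAtLeast (G : Multigraph V E) (k : ℕ) : Prop :=
  ∀ S : Finset E, S.card < k → ∀ u v : V, G.ReachableAvoiding ↑S u v

/-- The degree of a vertex: the number of edges incident with it. -/
def degree (G : Multigraph V E) (v : V) : ℕ := {e | G.incident v e}.ncard

/-- `Δ` is the maximum degree of `G`. -/
def HasMaxDegree (G : Multigraph V E) (Δ : ℕ) : Prop :=
  (∀ v, G.degree v ≤ Δ) ∧ ∃ v, G.degree v = Δ

/-- The vertices of the subgraph spanned by the edge set `S`. -/
def vertexSet (G : Multigraph V E) (S : Set E) : Set V := {v | ∃ e ∈ S, G.incident v e}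

/-- One-step adjacency between vertices using an edge of `S`. -/
def adjIn (G : Multigraph V E) (S : Set E) (u v : V) : Prop :=
  ∃ e ∈ S, G.ends e = (u, v) ∨ G.ends e = (v, u)

/-- The edge set `S` forms a circuit, i.e. a 2-regular connected subgraph. -/
def IsCircuit (G : Multigraph V E) (S : Set E) : Prop :=
  S.Nonempty ∧ (∀ v ∈ G.vertexSet S, {e ∈ S | G.incident v e}.ncard = 2) ∧
    ∀ u ∈ G.vertexSet S, ∀ v ∈ G.vertexSet S, Relation.ReflTransGen (G.adjIn S) u v

/-- `C 0, …, C n` (given by their edge sets) is a circuit chain: each `C i` is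
a circuit, non-consecutive circuits are vertex-disjoint and consecutive
circuits intersect in exactly one vertex. -/
def IsCircuitChain (G : Multigraph V E) (n : ℕ) (C : Fin (n + 1) → Set E) : Prop :=
  (∀ i, G.IsCircuit (C i)) ∧
  (∀ i j : Fin (n + 1), (i : ℕ) + 1 < (j : ℕ) →
      G.vertexSet (C i) ∩ G.vertexSet (C j) = ∅) ∧
  (∀ i j : Fin (n + 1), (i : ℕ) + 1 = (j : ℕ) →
      ∃! v, v ∈ G.vertexSet (C i) ∩ G.vertexSet (C j))

/-- `v` is an internal vertex of the circuit `C i` of the chain: it belongs to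
no other circuit of the chain. -/
def InternalVertex (G : Multigraph V E) {n : ℕ} (C : Fin (n + 1) → Set E)
    (i : Fin (n + 1)) (v : V) : Prop :=
  v ∈ G.vertexSet (C i) ∧ ∀ j, j ≠ i → v ∉ G.vertexSet (C j)

/-- The circuit chain `C` connects `u` and `v`: they are internal vertices of
the first and of the last circuit of the chain. -/
def ChainConnects (G : Multigraph V E) {n : ℕ} (C : Fin (n + 1) → Set E) (u v : V) : Prop :=
  (G.InternalVertex C 0 u ∧ G.InternalVertex C (Fin.last n) v) ∨
  (G.InternalVertex C 0 v ∧ G.InternalVertex C (Fin.last n) u)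

/-- The value of `φ` on the edge `e` when `e` is reoriented so as to point
into the vertex `v`. -/
def dirInto {A : Type} [AddCommGroup A] (G : Multigraph V E) (φ : E → A) (e : E) (v : V) : A :=
  if (G.ends e).2 = v then φ e else -φ e

/-- Two adjacent edges are confluent if, after reorienting the pair so that it
is oriented consistently, they carry the same flow value. -/
def Confluent {A : Type} [AddCommGroup A] (G : Multigraph V E) (φ : E → A) (e f : E) : Prop :=
  e ≠ f ∧ ∃ v, G.incident v e ∧ G.incident v f ∧ G.dirInto φ e v + G.dirInto φ f v = 0

/-- Two adjacent edges are contrafluent if, after reorienting the pair so that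
it is oriented consistently, they carry opposite flow values. -/
def Contrafluent {A : Type} [AddCommGroup A] (G : Multigraph V E) (φ : E → A) (e f : E) : Prop :=
  e ≠ f ∧ ∃ v, G.incident v e ∧ G.incident v f ∧ G.dirInto φ e v = G.dirInto φ f v

/-- An unordered pair of adjacent edges. -/
def IsAdjacentPair (G : Multigraph V E) (p : Sym2 E) : Prop :=
  ∃ e f, p = s(e, f) ∧ G.Adjacent e f

/-- Two distinct pairs of adjacent edges are strongly intersecting if they
share exactly one edge and the edges together induce a subgraph containing a
vertex of degree three (i.e. all the edges involved share a common vertex). -/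
def StronglyIntersecting (G : Multigraph V E) (p q : Sym2 E) : Prop :=
  p ≠ q ∧ (∃! e, e ∈ p ∧ e ∈ q) ∧ ∃ v, ∀ e, e ∈ p ∨ e ∈ q → G.incident v e

/-- The unordered pair `p` consists of two (adjacent) edges confluent in `φ`. -/
def ConfluentPair {A : Type} [AddCommGroup A] (G : Multigraph V E) (φ : E → A)
    (p : Sym2 E) : Prop :=
  ∃ e f, p = s(e, f) ∧ G.Confluent φ e f

end Multigraph

section Helpers

open Multigraph

variable {V E : Type} {G : Multigraph V E}

/-- `e` joins `x` and `y` (in either orientation). -/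
def MJoins (G : Multigraph V E) (e : E) (x y : V) : Prop :=
  G.ends e = (x, y) ∨ G.ends e = (y, x)

lemma MJoins.symm {e : E} {x y : V} (h : MJoins G e x y) : MJoins G e y x := Or.symm h

lemma MJoins.ne {e : E} {x y : V} (h : MJoins G e x y) : x ≠ y := by
  rcases h with h | h
  · intro hxy; exact G.no_loops e (by rw [h, hxy])
  · intro hxy; exact G.no_loops e (by rw [h, hxy])

lemma MJoins.inc_left {e : E} {x y : V} (h : MJoins G e x y) : G.incident x e := by
  rcases h with h | h
  · exact Or.inl (by rw [h])
  · exact Or.inr (by rw [h])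

lemma MJoins.inc_right {e : E} {x y : V} (h : MJoins G e x y) : G.incident y e :=
  h.symm.inc_left

lemma mjoins_ends (G : Multigraph V E) (e : E) : MJoins G e (G.ends e).1 (G.ends e).2 :=
  Or.inl rfl

lemma MJoins.mem_of_incident {e : E} {x y v : V} (h : MJoins G e x y)
    (hv : G.incident v e) : v = x ∨ v = y := by
  rcases h with h | h <;> rcases hv with hv | hv <;>
    simp_all [Multigraph.incident] <;> tauto

lemma MJoins.eq_or {e : E} {x y x' y' : V} (h : MJoins G e x y) (h' : MJoins G e x' y') :
    (x = x' ∧ y = y') ∨ (x = y' ∧ y = x') := by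
  rcases h with h | h <;> rcases h' with h' | h' <;>
    · rw [h] at h'
      rcases Prod.mk.injEq .. ▸ h' with ⟨h1, h2⟩
      tauto

/-- A path presented by vertex and edge functions; vertices `f 0, …, f k`,
edges `g 0, …, g (k-1)`, with distinct vertices. -/
def IsPathF (G : Multigraph V E) (k : ℕ) (f : ℕ → V) (g : ℕ → E) : Prop :=
  (∀ ⦃i j⦄, i ≤ k → j ≤ k → f i = f j → i = j) ∧
    ∀ i, i < k → MJoins G (g i) (f i) (f (i + 1))

lemma IsPathF.edge_inj {k : ℕ} {f : ℕ → V} {g : ℕ → E} (h : IsPathF G k f g)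
    ⦃i j : ℕ⦄ (hi : i < k) (hj : j < k) (hg : g i = g j) : i = j := by
  have h1 := h.2 i hi
  have h2 := h.2 j hj
  rw [hg] at h1
  rcases h1.eq_or h2 with ⟨e1, e2⟩ | ⟨e1, e2⟩
  · exact h.1 (by omega) (by omega) e1
  · have := h.1 (Nat.le_of_lt hi) (by omega) e1
    have := h.1 (by omega) (Nat.le_of_lt hj) e2
    omega

/-- A cycle presented by vertex and edge functions: vertices `f 0, …, f (n-1)`
(all distinct), edges `g 0, …, g (n-1)` (all distinct), where `g i` joins
`f i` and `f ((i+1) % n)`. -/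
def IsCycleF (G : Multigraph V E) (n : ℕ) (f : ℕ → V) (g : ℕ → E) : Prop :=
  2 ≤ n ∧ (∀ ⦃i j⦄, i < n → j < n → f i = f j → i = j) ∧
    (∀ ⦃i j⦄, i < n → j < n → g i = g j → i = j) ∧
    ∀ i, i < n → MJoins G (g i) (f i) (f ((i + 1) % n))

namespace IsCycleF

variable {n : ℕ} {f : ℕ → V} {g : ℕ → E}

lemma pos (h : IsCycleF G n f g) : 0 < n := by have := h.1; omega

lemma joins (h : IsCycleF G n f g) {i : ℕ} (hi : i < n) :
    MJoins G (g i) (f i) (f ((i + 1) % n)) := h.2.2.2 i hi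

/-- Every endvertex of an edge of the cycle is a vertex of the cycle. -/
lemma mem_of_incident (h : IsCycleF G n f g) {e : E} (he : e ∈ g '' Set.Iio n)
    {z : V} (hz : G.incident z e) : z ∈ f '' Set.Iio n := by
  obtain ⟨i, hi, rfl⟩ := he
  rcases (h.joins hi).mem_of_incident hz with rfl | rfl
  · exact ⟨i, hi, rfl⟩
  · exact ⟨(i + 1) % n, Nat.mod_lt _ h.pos, rfl⟩

lemma vertexSet_eq (h : IsCycleF G n f g) :
    G.vertexSet (g '' Set.Iio n) = f '' Set.Iio n := by
  ext z
  constructor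
  · rintro ⟨e, he, hz⟩
    exact h.mem_of_incident he hz
  · rintro ⟨i, hi, rfl⟩
    exact ⟨g i, ⟨i, hi, rfl⟩, (h.joins hi).inc_left⟩

lemma pred_lemma (h : IsCycleF G n f g) {i t : ℕ} (hi : i < n) (ht : t < n)
    (htt : (t + 1) % n = i) : t = (i + (n - 1)) % n := by
  rcases Nat.lt_or_ge (t + 1) n with h' | h'
  · rw [Nat.mod_eq_of_lt h'] at htt
    subst htt
    have h2 : (t + 1 + (n - 1)) = t + n := by omega
    rw [h2, Nat.add_mod_right, Nat.mod_eq_of_lt ht]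
  · have hteq : t + 1 = n := by omega
    have : i = 0 := by rw [hteq, Nat.mod_self] at htt; omega
    subst this
    rw [Nat.zero_add, Nat.mod_eq_of_lt (by omega : n - 1 < n)]
    omega

lemma succ_pred (h : IsCycleF G n f g) {i : ℕ} (hi : i < n) :
    ((i + (n - 1)) % n + 1) % n = i := by
  have hpos := h.pos
  have h2 : i + (n - 1) + 1 = i + n := by omega
  calc ((i + (n - 1)) % n + 1) % n = (i + (n - 1) + 1) % n := by rw [Nat.mod_add_mod]
      _ = (i + n) % n := by rw [h2]
      _ = i := by rw [Nat.add_mod_right, Nat.mod_eq_of_lt hi]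

lemma pred_ne (h : IsCycleF G n f g) {i : ℕ} (hi : i < n) : (i + (n - 1)) % n ≠ i := by
  intro hceq
  have h2 := h.1
  rcases Nat.lt_or_ge (i + (n - 1)) n with h' | h'
  · rw [Nat.mod_eq_of_lt h'] at hceq; omega
  · have : i + (n - 1) - n < n := by omega
    have he : (i + (n - 1)) % n = i + (n - 1) - n := by
      rw [Nat.mod_eq_sub_mod h', Nat.mod_eq_of_lt this]
    omega

/-- The edge set of a cycle is a circuit of `G`. -/
lemma isCircuit (h : IsCycleF G n f g) : G.IsCircuit (g '' Set.Iio n) := by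
  refine ⟨⟨g 0, 0, Set.mem_Iio.mpr h.pos, rfl⟩, ?_, ?_⟩
  · intro z hz
    rw [h.vertexSet_eq] at hz
    obtain ⟨i, hi, rfl⟩ := hz
    have hset : {e ∈ g '' Set.Iio n | G.incident (f i) e} = {g i, g ((i + (n - 1)) % n)} := by
      ext e
      simp only [Set.mem_setOf_eq, Set.mem_insert_iff, Set.mem_singleton_iff]
      constructor
      · rintro ⟨⟨t, ht, rfl⟩, hinc⟩
        rcases (h.joins ht).mem_of_incident hinc with hfe | hfe
        · exact Or.inl (by rw [h.2.1 hi ht hfe])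
        · exact Or.inr (by rw [h.pred_lemma hi ht (h.2.1 (Nat.mod_lt _ h.pos) hi hfe.symm)])
      · rintro (rfl | rfl)
        · exact ⟨⟨i, hi, rfl⟩, (h.joins hi).inc_left⟩
        · refine ⟨⟨_, Nat.mod_lt _ h.pos, rfl⟩, ?_⟩
          have := h.joins (Nat.mod_lt (i + (n - 1)) h.pos)
          rw [h.succ_pred hi] at this
          exact this.inc_right
    rw [hset]
    refine Set.ncard_pair ?_
    intro hgeq
    exact h.pred_ne hi (h.2.2.1 (Nat.mod_lt _ h.pos) hi hgeq.symm)
  · -- connectivity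
    have hstep : ∀ i, i < n → Relation.ReflTransGen (G.adjIn (g '' Set.Iio n)) (f 0) (f i) := by
      intro i
      induction i with
      | zero => intro _; exact Relation.ReflTransGen.refl
      | succ i ih =>
        intro hi
        have hi' : i < n := by omega
        have := h.joins hi'
        have hmod : (i + 1) % n = i + 1 := Nat.mod_eq_of_lt hi
        rw [hmod] at this
        exact Relation.ReflTransGen.tail (ih hi')
          ⟨g i, ⟨i, hi', rfl⟩, by rcases this with h' | h' <;> [exact Or.inl h'; exact Or.inr h']⟩
    have hsymm : Symmetric (G.adjIn (g '' Set.Iio n)) := by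
      rintro x y ⟨e, he, h' | h'⟩ <;> exact ⟨e, he, by tauto⟩
    intro x hx y hy
    rw [h.vertexSet_eq] at hx hy
    obtain ⟨i, hi, rfl⟩ := hx
    obtain ⟨j, hj, rfl⟩ := hy
    exact Relation.ReflTransGen.trans
      ((@Relation.ReflTransGen.symmetric _ _ ⟨hsymm⟩).symm _ _ (hstep i hi)) (hstep j hj)

/-- Rotating a cycle. -/
lemma rotate (h : IsCycleF G n f g) (c : ℕ) :
    IsCycleF G n (fun i => f ((i + c) % n)) (fun i => g ((i + c) % n)) := by
  have hpos := h.pos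
  refine ⟨h.1, ?_, ?_, ?_⟩
  · intro i j hi hj hf
    have := h.2.1 (Nat.mod_lt _ hpos) (Nat.mod_lt _ hpos) hf
    have h2 : i % n = j % n := by
      have := Nat.ModEq.add_right_cancel' c (show i + c ≡ j + c [MOD n] from by
        unfold Nat.ModEq; exact this)
      exact this
    rwa [Nat.mod_eq_of_lt hi, Nat.mod_eq_of_lt hj] at h2
  · intro i j hi hj hg
    have := h.2.2.1 (Nat.mod_lt _ hpos) (Nat.mod_lt _ hpos) hg
    have h2 : i % n = j % n :=
      Nat.ModEq.add_right_cancel' c (show i + c ≡ j + c [MOD n] from this)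
    rwa [Nat.mod_eq_of_lt hi, Nat.mod_eq_of_lt hj] at h2
  · intro i hi
    have := h.joins (Nat.mod_lt (i + c) hpos)
    have harith : ((i + 1) % n + c) % n = ((i + c) % n + 1) % n := by
      conv_lhs => rw [Nat.mod_add_mod]
      conv_rhs => rw [Nat.mod_add_mod]
      congr 1
      omega
    simpa [harith] using this

end IsCycleF

lemma rotate_image {α : Type} (f : ℕ → α) {n : ℕ} (c : ℕ) (hn : 0 < n) :
    (fun i => f ((i + c) % n)) '' Set.Iio n = f '' Set.Iio n := by
  apply Set.Subset.antisymm
  · rintro x ⟨i, _, rfl⟩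
    exact ⟨(i + c) % n, Nat.mod_lt _ hn, rfl⟩
  · rintro x ⟨s, hs, rfl⟩
    refine ⟨(s + (n - c % n)) % n, Nat.mod_lt _ hn, ?_⟩
    simp only
    congr 1
    have h1 : (s + (n - c % n)) % n + c ≡ s + (n - c % n) + c [MOD n] :=
      Nat.ModEq.add_right c (Nat.mod_modEq _ n)
    have h2 : s + (n - c % n) + c ≡ s + (n - c % n) + c % n [MOD n] :=
      Nat.ModEq.add_left _ (Nat.mod_modEq c n).symm
    have h3 : s + (n - c % n) + c % n = s + n := by
      have := Nat.mod_lt c hn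
      omega
    have : (s + (n - c % n)) % n + c ≡ s + n [MOD n] := (h1.trans h2).trans (h3 ▸ Nat.ModEq.refl _)
    calc ((s + (n - c % n)) % n + c) % n = (s + n) % n := this
      _ = s := by rw [Nat.add_mod_right, Nat.mod_eq_of_lt hs]


lemma reach_eq_of_no_edges (hE : IsEmpty E) {S : Set E} {x y : V}
    (h : G.ReachableAvoiding S x y) : x = y := by
  induction h with
  | refl => rfl
  | tail _ hadj ih =>
    obtain ⟨e, _, _⟩ := hadj
    exact hE.elim e

lemma reach_path (hE : Nonempty E) {S : Set E} {x y : V}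
    (h : G.ReachableAvoiding S x y) :
    ∃ (k : ℕ) (f : ℕ → V) (g : ℕ → E), IsPathF G k f g ∧ f 0 = x ∧ f k = y ∧
      ∀ i, i < k → g i ∉ S := by
  induction h using Relation.ReflTransGen.head_induction_on with
  | refl =>
    exact ⟨0, fun _ => y, fun _ => Classical.choice hE,
      ⟨fun i j hi hj _ => by omega, fun i hi => by omega⟩, rfl, rfl, fun i hi => by omega⟩
  | head hadj _ ih =>
    rename_i a c _
    obtain ⟨k, f, g, hp, h0, hk, hS⟩ := ih
    obtain ⟨e, heS, he⟩ := hadj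
    have hjoin : MJoins G e a c := he
    by_cases hmem : ∃ j, j ≤ k ∧ f j = a
    · obtain ⟨j, hj, hfj⟩ := hmem
      refine ⟨k - j, fun i => f (j + i), fun i => g (j + i), ⟨?_, ?_⟩, ?_, ?_, ?_⟩
      · intro i1 i2 h1 h2 hf
        have := hp.1 (show j + i1 ≤ k by omega) (show j + i2 ≤ k by omega) hf
        omega
      · intro i hi
        have := hp.2 (j + i) (by omega)
        simpa [Nat.add_assoc] using this
      · simpa using hfj
      · simp only
        rw [show j + (k - j) = k by omega, hk]
      · intro i hi
        exact hS (j + i) (by omega)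
    · push_neg at hmem
      refine ⟨k + 1, fun i => if i = 0 then a else f (i - 1),
        fun i => if i = 0 then e else g (i - 1), ⟨?_, ?_⟩, ?_, ?_, ?_⟩
      · intro i1 i2 h1 h2 hf
        by_cases hi1 : i1 = 0 <;> by_cases hi2 : i2 = 0 <;> simp [hi1, hi2] at hf ⊢
        · exact absurd hf.symm (hmem (i2 - 1) (by omega))
        · exact absurd hf (hmem (i1 - 1) (by omega))
        · have := hp.1 (show i1 - 1 ≤ k by omega) (show i2 - 1 ≤ k by omega) hf
          omega
      · intro i hi
        by_cases hi0 : i = 0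
        · subst hi0
          simpa [h0] using hjoin
        · have := hp.2 (i - 1) (by omega)
          simp only [hi0, if_neg, ite_false]
          rw [show i + 1 - 1 = i - 1 + 1 by omega]
          simpa [hi0] using this
      · simp
      · simp only [Nat.add_sub_cancel]
        rw [if_neg (by omega), hk]
      · intro i hi
        by_cases hi0 : i = 0
        · simpa [hi0] using heS
        · simpa [hi0] using hS (i - 1) (by omega)

/-- From a non-bridge edge joining `x` and `y`, produce a cycle through `x`
(at position `0`) and `y`. -/
lemma exists_cycle_anchored (h2ec : G.EdgeConnAtLeast 2) {e : E} {x y : V}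
    (hxy : MJoins G e x y) :
    ∃ (n : ℕ) (f : ℕ → V) (g : ℕ → E), IsCycleF G n f g ∧ f 0 = x ∧
      ∃ t, t < n ∧ f t = y := by
  have hE : Nonempty E := ⟨e⟩
  have hreach : G.ReachableAvoiding (↑({e} : Finset E)) (G.ends e).1 (G.ends e).2 :=
    h2ec {e} (by simp) _ _
  obtain ⟨k, f, g, hp, h0, hk, hS⟩ := reach_path hE hreach
  have hne : (G.ends e).1 ≠ (G.ends e).2 := G.no_loops e
  have hk1 : 1 ≤ k := by
    rcases Nat.eq_zero_or_pos k with rfl | h'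
    · exact absurd (h0.symm.trans hk) hne
    · exact h'
  have hcyc : IsCycleF G (k + 1) f (fun i => if i = k then e else g i) := by
    refine ⟨by omega, fun i j hi hj hf => hp.1 (by omega) (by omega) hf, ?_, ?_⟩
    · intro i j hi hj hg
      simp only at hg
      by_cases hik : i = k <;> by_cases hjk : j = k
      · omega
      · rw [if_pos hik, if_neg hjk] at hg
        exact absurd (by simp [← hg]) (hS j (by omega))
      · rw [if_neg hik, if_pos hjk] at hg
        exact absurd (by simp [hg]) (hS i (by omega))
      · rw [if_neg hik, if_neg hjk] at hg
        exact hp.edge_inj (by omega) (by omega) hg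
    · intro i hi
      show MJoins G (if i = k then e else g i) (f i) (f ((i + 1) % (k + 1)))
      by_cases hik : i = k
      · rw [if_pos hik, hik, Nat.mod_self, h0, hk]
        exact (mjoins_ends G e).symm
      · rw [if_neg hik, Nat.mod_eq_of_lt (by omega)]
        exact hp.2 i (by omega)
  rcases hxy.eq_or (mjoins_ends G e) with ⟨hx1, hy2⟩ | ⟨hx2, hy1⟩
  · exact ⟨k + 1, f, _, hcyc, h0.trans hx1.symm, k, by omega, hk.trans hy2.symm⟩
  · refine ⟨k + 1, _, _, hcyc.rotate k, ?_, 1, by omega, ?_⟩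
    · show f ((0 + k) % (k + 1)) = x
      rw [Nat.zero_add, Nat.mod_eq_of_lt (by omega), hk]
      exact hx2.symm
    · show f ((1 + k) % (k + 1)) = y
      rw [show 1 + k = k + 1 by omega, Nat.mod_self, h0]
      exact hy1.symm


/-- Truncating a circuit chain. -/
lemma chain_trunc {n : ℕ} {C : Fin (n + 1) → Set E} (hC : G.IsCircuitChain n C)
    {J : ℕ} (hJ : J ≤ n) :
    G.IsCircuitChain J (fun i : Fin (J + 1) => C ⟨(i : ℕ), by omega⟩) := by
  obtain ⟨h1, h2, h3⟩ := hC
  refine ⟨fun i => h1 _, fun i j hij => h2 ⟨i, by omega⟩ ⟨j, by omega⟩ hij,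
    fun i j hij => h3 ⟨i, by omega⟩ ⟨j, by omega⟩ hij⟩

/-- Reversing a circuit chain. -/
lemma chain_reverse {n : ℕ} {C : Fin (n + 1) → Set E} (hC : G.IsCircuitChain n C) :
    G.IsCircuitChain n (fun i : Fin (n + 1) => C ⟨n - (i : ℕ), by omega⟩) := by
  obtain ⟨h1, h2, h3⟩ := hC
  refine ⟨fun i => h1 _, ?_, ?_⟩
  · intro i j hij
    have hi := i.isLt
    have hj := j.isLt
    have key := h2 ⟨n - (j : ℕ), by omega⟩ ⟨n - (i : ℕ), by omega⟩
      (show (n : ℕ) - (j : ℕ) + 1 < n - (i : ℕ) from by omega)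
    rw [Set.inter_comm]
    exact key
  · intro i j hij
    have hi := i.isLt
    have hj := j.isLt
    have key := h3 ⟨n - (j : ℕ), by omega⟩ ⟨n - (i : ℕ), by omega⟩
      (show (n : ℕ) - (j : ℕ) + 1 = n - (i : ℕ) from by omega)
    obtain ⟨y, hy, hyu⟩ := key
    exact ⟨y, ⟨hy.2, hy.1⟩, fun z hz => hyu z ⟨hz.2, hz.1⟩⟩

/-- Extending (a truncation of) a circuit chain by one further circuit. -/
lemma chain_extend {n : ℕ} {C : Fin (n + 1) → Set E} (hC : G.IsCircuitChain n C)
    {J : ℕ} (hJ : J ≤ n) {D : Set E} (hD : G.IsCircuit D)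
    (hdisj : ∀ m : ℕ, (hm : m < J) → G.vertexSet (C ⟨m, by omega⟩) ∩ G.vertexSet D = ∅)
    (hone : ∃! y, y ∈ G.vertexSet (C ⟨J, by omega⟩) ∩ G.vertexSet D) :
    G.IsCircuitChain (J + 1)
      (fun i : Fin (J + 2) => if h : (i : ℕ) < J + 1 then C ⟨(i : ℕ), by omega⟩ else D) := by
  obtain ⟨h1, h2, h3⟩ := hC
  refine ⟨?_, ?_, ?_⟩
  · intro i
    by_cases h : (i : ℕ) < J + 1 <;> simp [h]
    · exact h1 _
    · exact hD
  · intro i j hij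
    have hj := j.isLt
    have hi' : (i : ℕ) < J + 1 := by omega
    beta_reduce
    rw [dif_pos hi']
    by_cases h : (j : ℕ) < J + 1
    · rw [dif_pos h]
      exact h2 ⟨i, by omega⟩ ⟨j, by omega⟩ (show (i : ℕ) + 1 < (j : ℕ) from hij)
    · rw [dif_neg h]
      exact hdisj i (by omega)
  · intro i j hij
    have hj := j.isLt
    have hi' : (i : ℕ) < J + 1 := by omega
    beta_reduce
    rw [dif_pos hi']
    by_cases h : (j : ℕ) < J + 1
    · rw [dif_pos h]
      exact h3 ⟨i, by omega⟩ ⟨j, by omega⟩ (show (i : ℕ) + 1 = (j : ℕ) from hij)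
    · rw [dif_neg h]
      have hieq : (i : ℕ) = J := by omega
      have : (⟨(i : ℕ), by omega⟩ : Fin (n + 1)) = ⟨J, by omega⟩ := by
        exact Fin.ext hieq
      rw [this]
      exact hone

/-- From a cycle, extract a path (arc) from `f 0` to `f rb` whose vertex set
contains the prescribed vertex `f rx`. -/
lemma exists_arc {n : ℕ} {f : ℕ → V} {g : ℕ → E} (hc : IsCycleF G n f g)
    {rb rx : ℕ} (hrb0 : 0 < rb) (hrb : rb < n) (hrx : rx < n) :
    ∃ (k : ℕ) (qf : ℕ → V) (qg : ℕ → E), IsPathF G k qf qg ∧ 0 < k ∧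
      qf 0 = f 0 ∧ qf k = f rb ∧
      (∀ t, t ≤ k → ∃ s, s < n ∧ qf t = f s) ∧
      (∀ t, t < k → ∃ s, s < n ∧ qg t = g s) ∧
      (∃ t, t ≤ k ∧ qf t = f rx) := by
  rcases le_or_gt rx rb with hcase | hcase
  · -- forward arc
    refine ⟨rb, f, g, ⟨fun i j hi hj hf => hc.2.1 (by omega) (by omega) hf, ?_⟩,
      hrb0, rfl, rfl, fun t ht => ⟨t, by omega, rfl⟩, fun t ht => ⟨t, by omega, rfl⟩,
      rx, hcase, rfl⟩
    intro i hi
    have := hc.joins (show i < n by omega)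
    rwa [Nat.mod_eq_of_lt (by omega)] at this
  · -- backward arc
    have hval : ∀ t, t ≤ n - rb → (n - t) % n = if t = 0 then 0 else n - t := by
      intro t ht
      by_cases ht0 : t = 0
      · simp [ht0, Nat.mod_self]
      · rw [if_neg ht0, Nat.mod_eq_of_lt (by omega)]
    refine ⟨n - rb, fun t => f ((n - t) % n), fun t => g (n - 1 - t), ⟨?_, ?_⟩,
      by omega, ?_, ?_, fun t ht => ⟨(n - t) % n, Nat.mod_lt _ hc.pos, rfl⟩,
      fun t ht => ⟨n - 1 - t, by omega, rfl⟩, n - rx, by omega, ?_⟩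
    · intro i j hi hj hf
      have := hc.2.1 (Nat.mod_lt _ hc.pos) (Nat.mod_lt _ hc.pos) hf
      rw [hval i hi, hval j hj] at this
      by_cases hi0 : i = 0 <;> by_cases hj0 : j = 0 <;> simp [hi0, hj0] at this <;> omega
    · intro t ht
      have hj := hc.joins (show n - 1 - t < n by omega)
      have h1 : (n - 1 - t + 1) % n = (n - t) % n := by
        congr 1
        omega
      rw [h1] at hj
      have h2 : (n - (t + 1)) % n = n - 1 - t := by
        rw [hval (t + 1) (by omega), if_neg (by omega)]
        omega
      simp only [h2]
      exact hj.symm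
    · simp [Nat.mod_self]
    · simp only
      rw [hval (n - rb) (le_refl _), if_neg (by omega)]
      congr 1
      omega
    · simp only
      rw [hval (n - rx) (by omega), if_neg (by omega)]
      congr 1
      omega

/-- Index bookkeeping function for `glue_cycle`. -/
def gval (kq q nd i : ℕ) : ℕ :=
  if i - kq < nd - q then q + (i - kq) else i - kq - (nd - q)

lemma gval_mod {kq q nd p : ℕ} (hp : 0 < p) (hpq : p < q) (hq : q < nd)
    {i : ℕ} (hki : kq ≤ i) (hin : i ≤ kq + (nd - q) + p) :
    (q + (i - kq)) % nd = gval kq q nd i := by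
  unfold gval
  split
  · exact Nat.mod_eq_of_lt (by omega)
  · rw [Nat.mod_eq_sub_mod (by omega), Nat.mod_eq_of_lt (by omega)]
    omega

lemma gval_lt {kq q nd p : ℕ} (hp : 0 < p) (hpq : p < q) (hq : q < nd)
    {i : ℕ} (hin : i ≤ kq + (nd - q) + p) : gval kq q nd i < nd := by
  unfold gval; split <;> omega

lemma gval_inj {kq q nd p : ℕ} (hp : 0 < p) (hpq : p < q) (hq : q < nd)
    {i j : ℕ} (hki : kq ≤ i) (hin : i ≤ kq + (nd - q) + p)
    (hkj : kq ≤ j) (hjn : j ≤ kq + (nd - q) + p)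
    (h : gval kq q nd i = gval kq q nd j) : i = j := by
  unfold gval at h; split at h <;> split at h <;> omega

lemma gval_off {kq q nd p : ℕ} (hp : 0 < p) (hpq : p < q) (hq : q < nd)
    {i : ℕ} (hki : kq < i) (hin : i < kq + (nd - q) + p) :
    gval kq q nd i < p ∨ q < gval kq q nd i := by
  unfold gval; split <;> omega

/-- Glue an arc `qf/qg` (from `fd p` to `fd q`, staying inside `Z`) with the
part of the cycle `fd/gd` outside `[p,q]` (which avoids `Z`), obtaining a new
cycle. -/
lemma glue_cycle {nd kq p q : ℕ} {fd : ℕ → V} {gd : ℕ → E} {qf : ℕ → V} {qg : ℕ → E}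
    {Z : Set V}
    (hD : IsCycleF G nd fd gd) (hQ : IsPathF G kq qf qg) (hk : 0 < kq)
    (hp : 0 < p) (hpq : p < q) (hq : q < nd)
    (ha : qf 0 = fd p) (hb : qf kq = fd q)
    (hQV : ∀ t, t ≤ kq → qf t ∈ Z)
    (hQE : ∀ t, t < kq → ∀ z, G.incident z (qg t) → z ∈ Z)
    (hoff : ∀ t, t < nd → (t < p ∨ q < t) → fd t ∉ Z) :
    ∃ (n' : ℕ) (f' : ℕ → V) (g' : ℕ → E), IsCycleF G n' f' g' ∧
      (∀ t, t ≤ kq → qf t ∈ f' '' Set.Iio n') ∧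
      fd 0 ∈ f' '' Set.Iio n' ∧
      (∀ z, z ∈ f' '' Set.Iio n' → z ∈ Z → ∃ t, t ≤ kq ∧ z = qf t) := by
  set n' := kq + (nd - q) + p with hn'
  set f' : ℕ → V := fun i => if i ≤ kq then qf i else fd (gval kq q nd i) with hf'
  set g' : ℕ → E := fun i => if i < kq then qg i else gd (gval kq q nd i) with hg'
  have hkqn : kq < n' := by omega
  have hfval : ∀ i, kq < i → i ≤ n' → f' i = fd (gval kq q nd i) := by
    intro i h1 h2
    rw [hf']
    simp only [if_neg (by omega : ¬ i ≤ kq)]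
  have hfq : ∀ i, i ≤ kq → f' i = qf i := by
    intro i h1
    rw [hf']
    simp only [if_pos h1]
  have hgoal_off : ∀ i, kq < i → i < n' → fd (gval kq q nd i) ∉ Z := by
    intro i h1 h2
    exact hoff _ (gval_lt hp hpq hq (by omega)) (gval_off hp hpq hq h1 h2)
  have hcyc : IsCycleF G n' f' g' := by
    refine ⟨by omega, ?_, ?_, ?_⟩
    · -- vertex injectivity
      intro i j hi hj hf
      rcases le_or_gt i kq with hik | hik <;> rcases le_or_gt j kq with hjk | hjk
      · exact hQ.1 hik hjk (by rwa [hfq i hik, hfq j hjk] at hf)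
      · rw [hfq i hik, hfval j hjk (by omega)] at hf
        exact absurd (hf ▸ hQV i hik) (hgoal_off j hjk hj)
      · rw [hfq j hjk, hfval i hik (by omega)] at hf
        exact absurd (hf ▸ hQV j hjk) (hgoal_off i hik hi)
      · rw [hfval i hik (by omega), hfval j hjk (by omega)] at hf
        have := hD.2.1 (gval_lt hp hpq hq (by omega)) (gval_lt hp hpq hq (by omega)) hf
        exact gval_inj hp hpq hq (by omega) (by omega) (by omega) (by omega) this
    · -- edge injectivity
      intro i j hi hj hg
      have hgv : ∀ t, kq ≤ t → t < n' → g' t = gd (gval kq q nd t) := by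
        intro t h1 _
        rw [hg']
        simp only [if_neg (by omega : ¬ t < kq)]
      have hgq : ∀ t, t < kq → g' t = qg t := by
        intro t h1
        rw [hg']
        simp only [if_pos h1]
      have hmix : ∀ i1 i2, i1 < kq → kq ≤ i2 → i2 < n' → qg i1 ≠ gd (gval kq q nd i2) := by
        intro i1 i2 h1 h2 h3 heq
        -- find an endpoint of gd (gval i2) outside Z
        have hjoins := hD.joins (gval_lt hp hpq hq (show i2 ≤ n' by omega) : gval kq q nd i2 < nd)
        have hbad : ∃ z, G.incident z (gd (gval kq q nd i2)) ∧ z ∉ Z := by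
          rcases eq_or_lt_of_le h2 with heq | h2'
          · -- i2 = kq : gval = q, second endpoint off Z
            have hgq2 : gval kq q nd i2 = q := by
              rw [← heq]; unfold gval; split <;> omega
            refine ⟨fd ((gval kq q nd i2 + 1) % nd), hjoins.inc_right, ?_⟩
            rw [hgq2]
            rcases Nat.lt_or_ge (q + 1) nd with h' | h'
            · rw [Nat.mod_eq_of_lt h']
              exact hoff _ h' (Or.inr (by omega))
            · have : (q + 1) % nd = 0 := by
                have : q + 1 = nd := by omega
                rw [this, Nat.mod_self]
              rw [this]
              exact hoff 0 (by omega) (Or.inl hp)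
          · exact ⟨fd (gval kq q nd i2), hjoins.inc_left, hgoal_off i2 h2' h3⟩
        obtain ⟨z, hz1, hz2⟩ := hbad
        exact hz2 (hQE i1 h1 z (heq ▸ hz1))
      rcases lt_or_ge i kq with hik | hik <;> rcases lt_or_ge j kq with hjk | hjk
      · exact hQ.edge_inj hik hjk (by rwa [hgq i hik, hgq j hjk] at hg)
      · rw [hgq i hik, hgv j hjk hj] at hg
        exact absurd hg (hmix i j hik hjk hj)
      · rw [hgq j hjk, hgv i hik hi] at hg
        exact absurd hg.symm (hmix j i hjk hik hi)
      · rw [hgv i hik hi, hgv j hjk hj] at hg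
        have := hD.2.2.1 (gval_lt hp hpq hq (by omega)) (gval_lt hp hpq hq (by omega)) hg
        exact gval_inj hp hpq hq (by omega) (by omega) (by omega) (by omega) this
    · -- joins
      intro i hi
      rcases lt_or_ge i kq with hik | hik
      · have h1 : g' i = qg i := by rw [hg']; simp only [if_pos hik]
        have h2 : (i + 1) % n' = i + 1 := Nat.mod_eq_of_lt (by omega)
        rw [h1, h2, hfq i (by omega), hfq (i + 1) (by omega)]
        exact hQ.2 i hik
      · have h1 : g' i = gd (gval kq q nd i) := by
          rw [hg']; simp only [if_neg (by omega : ¬ i < kq)]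
        have hlt : gval kq q nd i < nd := gval_lt hp hpq hq (by omega)
        have hjoins := hD.joins hlt
        have h2 : f' i = fd (gval kq q nd i) := by
          rcases eq_or_lt_of_le hik with heq | hik'
          · have hgvq : gval kq q nd i = q := by
              rw [← heq]; unfold gval; split <;> omega
            rw [hgvq, hfq i (by omega), ← heq, hb]
          · exact hfval i hik' (by omega)
        have h3 : f' ((i + 1) % n') = fd ((gval kq q nd i + 1) % nd) := by
          rcases Nat.lt_or_ge (i + 1) n' with h' | h'
          · rw [Nat.mod_eq_of_lt h']
            have e1 : (gval kq q nd i + 1) % nd = gval kq q nd (i + 1) := by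
              rw [← gval_mod hp hpq hq hik (by omega), Nat.mod_add_mod,
                show q + (i - kq) + 1 = q + (i + 1 - kq) by omega,
                gval_mod hp hpq hq (by omega) (by omega)]
            rw [e1]
            exact hfval (i + 1) (by omega) (by omega)
          · have hin' : i + 1 = n' := by omega
            have e0 : (i + 1) % n' = 0 := by rw [hin', Nat.mod_self]
            have e1 : (gval kq q nd i + 1) % nd = p := by
              rw [← gval_mod hp hpq hq hik (by omega), Nat.mod_add_mod,
                show q + (i - kq) + 1 = nd + p by omega, Nat.add_mod_left,
                Nat.mod_eq_of_lt (by omega)]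
            rw [e0, e1, hfq 0 (by omega), ha]
        rw [h1, h2, h3]
        exact hjoins
  refine ⟨n', f', g', hcyc, ?_, ?_, ?_⟩
  · intro t ht
    exact ⟨t, Set.mem_Iio.mpr (by omega), hfq t ht⟩
  · refine ⟨kq + (nd - q), Set.mem_Iio.mpr (by omega), ?_⟩
    rw [hfval _ (by omega) (by omega)]
    congr 1
    unfold gval
    split <;> omega
  · rintro z ⟨i, hi, rfl⟩ hz
    have hi' : i < n' := hi
    rcases le_or_gt i kq with hik | hik
    · exact ⟨i, hik, hfq i hik⟩
    · rw [hfval i hik (by omega)] at hz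
      exact absurd hz (hgoal_off i hik hi')

lemma chain_single {D : Set E} (hD : G.IsCircuit D) :
    G.IsCircuitChain 0 (fun _ : Fin 1 => D) :=
  ⟨fun _ => hD, fun i j hij => absurd hij (by have := j.isLt; omega),
    fun i j hij => absurd hij (by have := j.isLt; omega)⟩

lemma internal_single {D : Set E} {y : V} (hy : y ∈ G.vertexSet D) (i : Fin 1) :
    G.InternalVertex (fun _ : Fin 1 => D) i y :=
  ⟨hy, fun j hj => absurd (Fin.ext (by have := j.isLt; have := i.isLt; omega)) hj⟩

set_option maxHeartbeats 2000000 in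
theorem aux_chain (G : Multigraph V E) (h2ec : G.EdgeConnAtLeast 2) (u : V) :
    ∀ L : ℕ, ∀ (v : V) (f : ℕ → V) (g : ℕ → E), u ≠ v → IsPathF G L f g →
      f 0 = u → f L = v →
      ∃ (n : ℕ) (C : Fin (n + 1) → Set E), G.IsCircuitChain n C ∧ G.ChainConnects C u v ∧
        ∀ i : Fin (n + 1), ∃ (m : ℕ) (fc : ℕ → V) (gc : ℕ → E), IsCycleF G m fc gc ∧
          C i = gc '' Set.Iio m := by
  intro L
  induction L with
  | zero =>
    intro v f g huv _ h0 hL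
    exact absurd (h0.symm.trans hL) huv
  | succ L ih =>
    intro v f g huv hp h0 hL
    have hjoin : MJoins G (g L) (f L) v := by
      have := hp.2 L (by omega)
      rwa [hL] at this
    by_cases hwu : f L = u
    · -- Base case: an edge joins u and v; take a single circuit through it.
      rw [hwu] at hjoin
      obtain ⟨m, fc, gc, hcyc, h0c, t, ht, htv⟩ := exists_cycle_anchored h2ec hjoin
      refine ⟨0, fun _ => gc '' Set.Iio m, chain_single hcyc.isCircuit, ?_, ?_⟩
      · left
        constructor
        · exact internal_single (by
            rw [hcyc.vertexSet_eq]; exact ⟨0, Set.mem_Iio.mpr hcyc.pos, h0c⟩) 0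
        · exact internal_single (by
            rw [hcyc.vertexSet_eq]; exact ⟨t, Set.mem_Iio.mpr ht, htv⟩) (Fin.last 0)
      · intro i
        exact ⟨m, fc, gc, hcyc, rfl⟩
    · -- Inductive step.
      have hpath' : IsPathF G L f g :=
        ⟨fun i j hi hj => hp.1 (by omega) (by omega), fun i hi => hp.2 i (by omega)⟩
      have huw : u ≠ f L := fun h => hwu h.symm
      obtain ⟨n0, C0, hchain0, hconn0, hdata0⟩ := ih (f L) f g huw hpath' h0 rfl
      -- Normalize: u internal in the first circuit, w internal in the last.
      have main : ∃ (n : ℕ) (C : Fin (n + 1) → Set E), G.IsCircuitChain n C ∧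
          G.InternalVertex C 0 u ∧ G.InternalVertex C (Fin.last n) (f L) ∧
          ∀ i : Fin (n + 1), ∃ (m : ℕ) (fc : ℕ → V) (gc : ℕ → E),
            IsCycleF G m fc gc ∧ C i = gc '' Set.Iio m := by
        rcases hconn0 with ⟨hu0, hwlast⟩ | ⟨hw0, hulast⟩
        · exact ⟨n0, C0, hchain0, hu0, hwlast, hdata0⟩
        · refine ⟨n0, fun i => C0 ⟨n0 - (i : ℕ), by omega⟩, chain_reverse hchain0, ?_, ?_,
            fun i => hdata0 _⟩
          · refine ⟨?_, ?_⟩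
            · have he : (⟨n0 - ((0 : Fin (n0 + 1)) : ℕ), by omega⟩ : Fin (n0 + 1)) =
                  Fin.last n0 := Fin.ext (by simp)
              beta_reduce
              rw [he]
              exact hulast.1
            · intro j hj
              refine hulast.2 ⟨n0 - (j : ℕ), by omega⟩ ?_
              intro hh
              apply hj
              have hv := congrArg Fin.val hh
              simp only [Fin.val_last] at hv
              have hjlt := j.isLt
              exact Fin.ext (by simp only [Fin.val_zero]; omega)
          · refine ⟨?_, ?_⟩
            · have he : (⟨n0 - ((Fin.last n0 : Fin (n0 + 1)) : ℕ), by omega⟩ : Fin (n0 + 1)) =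
                  0 := Fin.ext (by simp)
              beta_reduce
              rw [he]
              exact hw0.1
            · intro j hj
              refine hw0.2 ⟨n0 - (j : ℕ), by omega⟩ ?_
              intro hh
              apply hj
              have hv := congrArg Fin.val hh
              simp only [Fin.val_zero] at hv
              have hjlt := j.isLt
              exact Fin.ext (by simp only [Fin.val_last]; omega)
      clear hconn0 hdata0 hchain0
      obtain ⟨n, C, hchain, hintu, hintw, hdata⟩ := main
      by_cases hvZ : ∃ i : Fin (n + 1), v ∈ G.vertexSet (C i)
      · -- v already lies on the chain: truncate at the first circuit containing it.
        have hP : ∃ m : ℕ, ∃ hm : m ≤ n, v ∈ G.vertexSet (C ⟨m, by omega⟩) := by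
          obtain ⟨i1, hvi⟩ := hvZ
          refine ⟨(i1 : ℕ), by omega, ?_⟩
          rwa [show (⟨(i1 : ℕ), by omega⟩ : Fin (n + 1)) = i1 from Fin.ext rfl]
        haveI : DecidablePred (fun m : ℕ => ∃ hm : m ≤ n,
            v ∈ G.vertexSet (C ⟨m, by omega⟩)) := fun _ => Classical.propDecidable _
        set i0 := Nat.find hP with hi0def
        obtain ⟨hi0n, hi0v⟩ := Nat.find_spec hP
        refine ⟨i0, fun t : Fin (i0 + 1) => C ⟨(t : ℕ), by omega⟩,
          chain_trunc hchain hi0n, Or.inl ⟨⟨?_, ?_⟩, ⟨?_, ?_⟩⟩,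
          fun t => hdata ⟨(t : ℕ), by omega⟩⟩
        · beta_reduce
          rw [show (⟨((0 : Fin (i0 + 1)) : ℕ), by omega⟩ : Fin (n + 1)) = 0 from
            Fin.ext (by simp)]
          exact hintu.1
        · intro j hj
          beta_reduce
          refine hintu.2 ⟨(j : ℕ), by omega⟩ ?_
          intro hh
          apply hj
          have hv := congrArg Fin.val hh
          simp only [Fin.val_zero] at hv
          exact Fin.ext (by simp only [Fin.val_zero]; omega)
        · beta_reduce
          rw [show (⟨((Fin.last i0 : Fin (i0 + 1)) : ℕ), by omega⟩ : Fin (n + 1)) =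
            ⟨i0, by omega⟩ from Fin.ext (by simp)]
          exact hi0v
        · intro j hj
          beta_reduce
          intro hmem
          have hjlt : (j : ℕ) < i0 := by
            have := j.isLt
            rcases Nat.lt_or_ge (j : ℕ) i0 with h' | h'
            · exact h'
            · exact absurd (Fin.ext (by simp only [Fin.val_last]; omega)) hj
          exact Nat.find_min hP hjlt ⟨by omega, hmem⟩
      · -- v off the chain: extend.
        push_neg at hvZ
        obtain ⟨nd, fd, gd, hD, hfd0, tw, htw, htwv⟩ :=
          exists_cycle_anchored h2ec (hjoin.symm : MJoins G (g L) v (f L))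
        have hintu1' : u ∈ G.vertexSet (C ⟨0, by omega⟩) := by
          rw [show (⟨0, by omega⟩ : Fin (n + 1)) = 0 from Fin.ext (by simp)]
          exact hintu.1
        have hintw1' : f L ∈ G.vertexSet (C ⟨n, by omega⟩) := by
          rw [show (⟨n, by omega⟩ : Fin (n + 1)) = Fin.last n from Fin.ext (by simp)]
          exact hintw.1
        have hex1 : ∃ m : ℕ, ∃ hm : m ≤ n,
            (G.vertexSet (C ⟨m, by omega⟩) ∩ (fd '' Set.Iio nd)).Nonempty :=
          ⟨n, le_rfl, ⟨f L, hintw1', ⟨tw, Set.mem_Iio.mpr htw, htwv⟩⟩⟩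
        haveI : DecidablePred (fun m : ℕ => ∃ hm : m ≤ n,
            (G.vertexSet (C ⟨m, by omega⟩) ∩ (fd '' Set.Iio nd)).Nonempty) :=
          fun _ => Classical.propDecidable _
        set j := Nat.find hex1 with hjdef
        obtain ⟨hjn, z0, hz0C, hz0D⟩ := Nat.find_spec hex1
        set Zset : Set V :=
          {y | ∃ m : ℕ, ∃ hm : m ≤ j, y ∈ G.vertexSet (C ⟨m, by omega⟩)} with hZdef
        have hCsub : ∀ m : ℕ, (hm : m ≤ j) → ∀ y,
            y ∈ G.vertexSet (C ⟨m, by omega⟩) → y ∈ Zset :=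
          fun m hm y hy => ⟨m, hm, hy⟩
        have hvZs : v ∉ Zset := by
          rintro ⟨m, hm, hmem⟩
          exact hvZ _ hmem
        have hcapj : ∀ t, t < nd → fd t ∈ Zset →
            fd t ∈ G.vertexSet (C ⟨j, by omega⟩) := by
          rintro t ht ⟨m, hm, hmem⟩
          rcases eq_or_lt_of_le hm with heq | hlt
          · subst heq
            exact hmem
          · exact absurd ⟨by omega, fd t, hmem, ⟨t, Set.mem_Iio.mpr ht, rfl⟩⟩
              (Nat.find_min hex1 hlt)
        have hex2 : ∃ t, 0 < t ∧ t < nd ∧ fd t ∈ Zset := by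
          obtain ⟨tz, htz, htzv⟩ := hz0D
          have htz' : tz < nd := htz
          have hz0Z : z0 ∈ Zset := hCsub j le_rfl z0 hz0C
          have htz0 : 0 < tz := by
            rcases Nat.eq_zero_or_pos tz with h' | h'
            · exfalso
              apply hvZ ⟨j, by omega⟩
              have : fd 0 = z0 := by rw [← h']; exact htzv
              rw [← hfd0, this]
              exact hz0C
            · exact h'
          exact ⟨tz, htz0, htz', by rw [htzv]; exact hz0Z⟩
        haveI : DecidablePred (fun t : ℕ => 0 < t ∧ t < nd ∧ fd t ∈ Zset) :=
          fun _ => Classical.propDecidable _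
        set p := Nat.find hex2 with hpdef
        obtain ⟨hp0, hpnd, hpZ⟩ := Nat.find_spec hex2
        haveI : DecidablePred (fun t : ℕ => fd t ∈ Zset) :=
          fun _ => Classical.propDecidable _
        set q := Nat.findGreatest (fun t => fd t ∈ Zset) (nd - 1) with hqdef
        have hqZ : fd q ∈ Zset := by
          have hh := Nat.findGreatest_spec (P := fun t => fd t ∈ Zset)
            (show p ≤ nd - 1 by omega) hpZ
          rw [hqdef]
          exact hh
        have hpq' : p ≤ q := by
          rw [hqdef]
          exact Nat.le_findGreatest (by omega) hpZ
        have hqnd : q < nd := by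
          have hh : Nat.findGreatest (fun t => fd t ∈ Zset) (nd - 1) ≤ nd - 1 :=
            Nat.findGreatest_le (nd - 1)
          rw [← hqdef] at hh
          omega
        have hoff : ∀ t, t < nd → (t < p ∨ q < t) → fd t ∉ Zset := by
          intro t ht hcase hmem
          rcases hcase with h' | h'
          · rcases Nat.eq_zero_or_pos t with rfl | ht0
            · exact hvZs (hfd0 ▸ hmem)
            · exact Nat.find_min hex2 h' ⟨ht0, ht, hmem⟩
          · have h'' : Nat.findGreatest (fun t => fd t ∈ Zset) (nd - 1) < t := by
              rw [← hqdef]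
              exact h'
            exact Nat.findGreatest_is_greatest h'' (by omega) hmem
        have haC : fd p ∈ G.vertexSet (C ⟨j, by omega⟩) := hcapj p hpnd hpZ
        have hbC : fd q ∈ G.vertexSet (C ⟨j, by omega⟩) := hcapj q hqnd hqZ
        by_cases hpq2 : p = q
        · -- the cycle D meets the chain in the single vertex `fd p`
          have hVD : G.vertexSet (gd '' Set.Iio nd) = fd '' Set.Iio nd := hD.vertexSet_eq
          have hcapD : ∀ y, y ∈ G.vertexSet (gd '' Set.Iio nd) → y ∈ Zset → y = fd p := by
            intro y hy hyZ
            rw [hVD] at hy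
            obtain ⟨t, ht, rfl⟩ := hy
            have ht' : t < nd := ht
            by_cases hcase : t < p ∨ q < t
            · exact absurd hyZ (hoff t ht' hcase)
            · push_neg at hcase
              have : t = p := by omega
              rw [this]
          have hex3 : ∃ m : ℕ, ∃ hm : m ≤ n, fd p ∈ G.vertexSet (C ⟨m, by omega⟩) :=
            ⟨j, by omega, haC⟩
          haveI : DecidablePred (fun m : ℕ => ∃ hm : m ≤ n,
              fd p ∈ G.vertexSet (C ⟨m, by omega⟩)) := fun _ => Classical.propDecidable _
          set j' := Nat.find hex3 with hj'def
          obtain ⟨hj'n, hj'mem⟩ := Nat.find_spec hex3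
          have hj'j : j' ≤ j := Nat.find_min' hex3 ⟨by omega, haC⟩
          by_cases huA : u = fd p
          · refine ⟨0, fun _ => gd '' Set.Iio nd, chain_single hD.isCircuit,
              Or.inl ⟨internal_single ?_ 0, internal_single ?_ (Fin.last 0)⟩,
              fun _ => ⟨nd, fd, gd, hD, rfl⟩⟩
            · rw [hVD]
              exact ⟨p, Set.mem_Iio.mpr hpnd, huA.symm⟩
            · rw [hVD]
              exact ⟨0, Set.mem_Iio.mpr hD.pos, hfd0⟩
          · have hdisj : ∀ m : ℕ, (hm : m < j') →
                G.vertexSet (C ⟨m, by omega⟩) ∩ G.vertexSet (gd '' Set.Iio nd) = ∅ := by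
              intro m hm
              ext y
              simp only [Set.mem_inter_iff, Set.mem_empty_iff_false, iff_false, not_and]
              intro hyC hyD
              have hyZ : y ∈ Zset := hCsub m (by omega) y hyC
              have hy := hcapD y hyD hyZ
              subst hy
              exact Nat.find_min hex3 hm ⟨by omega, hyC⟩
            have hone : ∃! y, y ∈ G.vertexSet (C ⟨j', by omega⟩) ∩
                G.vertexSet (gd '' Set.Iio nd) := by
              refine ⟨fd p, ⟨hj'mem, ?_⟩, ?_⟩
              · rw [hVD]
                exact ⟨p, Set.mem_Iio.mpr hpnd, rfl⟩
              · rintro y ⟨hyC, hyD⟩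
                exact hcapD y hyD (hCsub j' (by omega) y hyC)
            have hnew := chain_extend hchain hj'n hD.isCircuit hdisj hone
            refine ⟨j' + 1, _, hnew, Or.inl ⟨⟨?_, ?_⟩, ⟨?_, ?_⟩⟩, ?_⟩
            · beta_reduce
              rw [dif_pos (show (((0 : Fin (j' + 2))) : ℕ) < j' + 1 by simp)]
              rw [show (⟨(((0 : Fin (j' + 2))) : ℕ), by simp only [Fin.val_zero]; omega⟩ :
                  Fin (n + 1)) = 0 from Fin.ext (by simp)]
              exact hintu.1
            · intro jj hjj
              beta_reduce
              by_cases hlt : (jj : ℕ) < j' + 1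
              · rw [dif_pos hlt]
                refine hintu.2 ⟨(jj : ℕ), by omega⟩ ?_
                intro hh
                apply hjj
                have hv := congrArg Fin.val hh
                simp only [Fin.val_zero] at hv
                exact Fin.ext (by simp only [Fin.val_zero]; omega)
              · rw [dif_neg hlt]
                intro hmem
                exact huA (hcapD u hmem (hCsub 0 (Nat.zero_le _) u hintu1'))
            · beta_reduce
              rw [dif_neg (show ¬ ((Fin.last (j' + 1) : Fin (j' + 2)) : ℕ) < j' + 1 by
                simp [Fin.val_last])]
              rw [hVD]
              exact ⟨0, Set.mem_Iio.mpr hD.pos, hfd0⟩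
            · intro jj hjj
              beta_reduce
              by_cases hlt : (jj : ℕ) < j' + 1
              · rw [dif_pos hlt]
                exact hvZ ⟨(jj : ℕ), by omega⟩
              · exact absurd (Fin.ext (by simp only [Fin.val_last]; have := jj.isLt; omega)) hjj
            · intro i
              by_cases h : (i : ℕ) < j' + 1
              · obtain ⟨m, fc, gc, hc, he⟩ := hdata ⟨(i : ℕ), by omega⟩
                exact ⟨m, fc, gc, hc, by beta_reduce; rw [dif_pos h]; exact he⟩
              · exact ⟨nd, fd, gd, hD, by beta_reduce; rw [dif_neg h]⟩
        · -- p < q : glue an arc of the circuit `C j` with part of `D`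
          have hplt : p < q := lt_of_le_of_ne hpq' hpq2
          obtain ⟨mc, fc, gc, hcj, hCj⟩ := hdata ⟨j, by omega⟩
          have hVCj : G.vertexSet (C ⟨j, by omega⟩) = fc '' Set.Iio mc := by
            rw [hCj, hcj.vertexSet_eq]
          have haim : fd p ∈ fc '' Set.Iio mc := by rw [← hVCj]; exact haC
          obtain ⟨ra, hra, hrafc⟩ := haim
          have hra' : ra < mc := hra
          obtain ⟨fc2, gc2, hcj2, hfc2img, hgc2img, hfc2_0⟩ :
              ∃ (fc2 : ℕ → V) (gc2 : ℕ → E), IsCycleF G mc fc2 gc2 ∧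
                fc2 '' Set.Iio mc = fc '' Set.Iio mc ∧
                gc2 '' Set.Iio mc = gc '' Set.Iio mc ∧ fc2 0 = fd p :=
            ⟨_, _, hcj.rotate ra, rotate_image fc ra hcj.pos, rotate_image gc ra hcj.pos,
              show fc ((0 + ra) % mc) = fd p by rw [Nat.zero_add, Nat.mod_eq_of_lt hra', hrafc]⟩
          have hbim : fd q ∈ fc2 '' Set.Iio mc := by rw [hfc2img, ← hVCj]; exact hbC
          obtain ⟨rb, hrb, hrbfc⟩ := hbim
          have hrb' : rb < mc := hrb
          have hrb0 : 0 < rb := by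
            rcases Nat.eq_zero_or_pos rb with h' | h'
            · exfalso
              rw [h', hfc2_0] at hrbfc
              exact hpq2 (hD.2.1 hpnd hqnd hrbfc)
            · exact h'
          have key : ∀ x : V, ∀ rx : ℕ, rx < mc → fc2 rx = x →
              ∃ (n' : ℕ) (f' : ℕ → V) (g' : ℕ → E), IsCycleF G n' f' g' ∧
                x ∈ f' '' Set.Iio n' ∧ v ∈ f' '' Set.Iio n' ∧
                (∀ z, z ∈ f' '' Set.Iio n' → z ∈ Zset →
                  z ∈ G.vertexSet (C ⟨j, by omega⟩)) := by
            intro x rx hrx hrxfc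
            obtain ⟨kq, qf, qg, hQ, hkq, hqf0, hqfk, hQmem, hQEmem, tx, htxk, hqtx⟩ :=
              exists_arc hcj2 hrb0 hrb' hrx
            have hQV : ∀ t, t ≤ kq → qf t ∈ Zset := by
              intro t ht
              obtain ⟨s, hs, hqs⟩ := hQmem t ht
              apply hCsub j le_rfl
              rw [hVCj, ← hfc2img]
              exact ⟨s, Set.mem_Iio.mpr hs, hqs.symm⟩
            have hQE : ∀ t, t < kq → ∀ z, G.incident z (qg t) → z ∈ Zset := by
              intro t ht z hz
              obtain ⟨s, hs, hqs⟩ := hQEmem t ht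
              apply hCsub j le_rfl
              refine ⟨qg t, ?_, hz⟩
              rw [hCj, ← hgc2img]
              exact ⟨s, Set.mem_Iio.mpr hs, hqs.symm⟩
            obtain ⟨n', f', g', hcyc', ho1, ho2, ho3⟩ :=
              glue_cycle hD hQ hkq hp0 hplt hqnd (by rw [hqf0, hfc2_0])
                (by rw [hqfk, hrbfc]) hQV hQE hoff
            refine ⟨n', f', g', hcyc', ?_, ?_, ?_⟩
            · rw [← hrxfc, ← hqtx]
              exact ho1 tx htxk
            · rw [← hfd0]
              exact ho2
            · intro z hzimg hzZ
              obtain ⟨t, ht, hzq⟩ := ho3 z hzimg hzZ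
              obtain ⟨s, hs, hqs⟩ := hQmem t ht
              rw [hVCj, ← hfc2img]
              exact ⟨s, Set.mem_Iio.mpr hs, (hqs.symm.trans hzq.symm : fc2 s = z)⟩
          by_cases hj0 : j = 0
          · -- the new circuit contains both u and v: a one-circuit chain
            have huim : u ∈ fc2 '' Set.Iio mc := by
              rw [hfc2img, ← hVCj,
                show (⟨j, by omega⟩ : Fin (n + 1)) = ⟨0, by omega⟩ from Fin.ext hj0]
              exact hintu1'
            obtain ⟨rx, hrx, hrxfc⟩ := huim
            obtain ⟨n', f', g', hcyc', hx', hv', hsub'⟩ := key u rx hrx hrxfc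
            exact ⟨0, fun _ => g' '' Set.Iio n', chain_single hcyc'.isCircuit,
              Or.inl ⟨internal_single (by rw [hcyc'.vertexSet_eq]; exact hx') 0,
                internal_single (by rw [hcyc'.vertexSet_eq]; exact hv') (Fin.last 0)⟩,
              fun _ => ⟨n', f', g', hcyc', rfl⟩⟩
          · -- attach the new circuit after `C (j-1)`
            have hj1 : 1 ≤ j := by omega
            obtain ⟨x, hxmem, hxuniq⟩ :=
              hchain.2.2 ⟨j - 1, by omega⟩ ⟨j, by omega⟩ (show j - 1 + 1 = j by omega)
            have hxim : x ∈ fc2 '' Set.Iio mc := by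
              rw [hfc2img, ← hVCj]
              exact hxmem.2
            obtain ⟨rx, hrx, hrxfc⟩ := hxim
            obtain ⟨n', f', g', hcyc', hx', hv', hsub'⟩ := key x rx hrx hrxfc
            have hdisj : ∀ m : ℕ, (hm : m < j - 1) →
                G.vertexSet (C ⟨m, by omega⟩) ∩ G.vertexSet (g' '' Set.Iio n') = ∅ := by
              intro m hm
              ext y
              simp only [Set.mem_inter_iff, Set.mem_empty_iff_false, iff_false, not_and]
              intro hyC hyD
              have hyZ : y ∈ Zset := hCsub m (by omega) y hyC
              rw [hcyc'.vertexSet_eq] at hyD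
              have hyCj := hsub' y hyD hyZ
              have hdis := hchain.2.1 ⟨m, by omega⟩ ⟨j, by omega⟩
                (show m + 1 < j by omega)
              have : y ∈ (∅ : Set V) := hdis ▸ Set.mem_inter hyC hyCj
              exact this
            have hone : ∃! y, y ∈ G.vertexSet (C ⟨j - 1, by omega⟩) ∩
                G.vertexSet (g' '' Set.Iio n') := by
              refine ⟨x, ⟨hxmem.1, by rw [hcyc'.vertexSet_eq]; exact hx'⟩, ?_⟩
              rintro y ⟨hyC, hyD⟩
              rw [hcyc'.vertexSet_eq] at hyD
              have hyZ : y ∈ Zset := hCsub (j - 1) (by omega) y hyC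
              have hyCj := hsub' y hyD hyZ
              exact hxuniq y ⟨hyC, hyCj⟩
            have hnew := chain_extend hchain (show j - 1 ≤ n by omega)
              hcyc'.isCircuit hdisj hone
            refine ⟨(j - 1) + 1, _, hnew, Or.inl ⟨⟨?_, ?_⟩, ⟨?_, ?_⟩⟩, ?_⟩
            · beta_reduce
              rw [dif_pos (show (((0 : Fin (j - 1 + 2))) : ℕ) < j - 1 + 1 by simp)]
              rw [show (⟨(((0 : Fin (j - 1 + 2))) : ℕ), by simp only [Fin.val_zero]; omega⟩ :
                  Fin (n + 1)) = 0 from Fin.ext (by simp)]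
              exact hintu.1
            · intro jj hjj
              beta_reduce
              by_cases hlt : (jj : ℕ) < j - 1 + 1
              · rw [dif_pos hlt]
                refine hintu.2 ⟨(jj : ℕ), by omega⟩ ?_
                intro hh
                apply hjj
                have hv := congrArg Fin.val hh
                simp only [Fin.val_zero] at hv
                exact Fin.ext (by simp only [Fin.val_zero]; omega)
              · rw [dif_neg hlt]
                intro hmem
                rw [hcyc'.vertexSet_eq] at hmem
                have huZ : u ∈ Zset := hCsub 0 (Nat.zero_le _) u hintu1'
                have huCj := hsub' u hmem huZ
                refine hintu.2 ⟨j, by omega⟩ ?_ huCj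
                intro hh
                have := congrArg Fin.val hh
                simp only [Fin.val_zero] at this
                omega
            · beta_reduce
              rw [dif_neg (show ¬ ((Fin.last (j - 1 + 1) : Fin (j - 1 + 2)) : ℕ) <
                j - 1 + 1 by simp [Fin.val_last])]
              rw [hcyc'.vertexSet_eq]
              exact hv'
            · intro jj hjj
              beta_reduce
              by_cases hlt : (jj : ℕ) < j - 1 + 1
              · rw [dif_pos hlt]
                exact hvZ ⟨(jj : ℕ), by omega⟩
              · refine absurd (Fin.ext ?_) hjj
                simp only [Fin.val_last]
                have := jj.isLt
                omega
            · intro i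
              by_cases h : (i : ℕ) < j - 1 + 1
              · obtain ⟨m, fcx, gcx, hc, he⟩ := hdata ⟨(i : ℕ), by omega⟩
                exact ⟨m, fcx, gcx, hc, by beta_reduce; rw [dif_pos h]; exact he⟩
              · exact ⟨n', f', g', hcyc', by beta_reduce; rw [dif_neg h]⟩


end Helpers


open Multigraph in
/-- Any two distinct vertices of a 2-edge-connected graph are
connected by a circuit chain. -/
theorem exists_circuitChain_connecting {V E : Type} (G : Multigraph V E)
    (h2ec : G.EdgeConnAtLeast 2) (u v : V) (huv : u ≠ v) :
    ∃ (n : ℕ) (C : Fin (n + 1) → Set E),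
      G.IsCircuitChain n C ∧ G.ChainConnects C u v := by
  by_cases hE : Nonempty E
  · have hreach : G.ReachableAvoiding (↑(∅ : Finset E)) u v := h2ec ∅ (by simp) u v
    obtain ⟨k, f, g, hp, h0, hk, -⟩ := reach_path hE hreach
    obtain ⟨n, C, hchain, hconn, -⟩ := aux_chain G h2ec u k v f g huv hp h0 hk
    exact ⟨n, C, hchain, hconn⟩
  · exfalso
    have hIE : IsEmpty E := not_nonempty_iff.mp hE
    have hreach : G.ReachableAvoiding (↑(∅ : Finset E)) u v := h2ec ∅ (by simp) u v
    exact huv (reach_eq_of_no_edges hIE hreach)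
end
end

section
/- Let k > 1 be an integer, and let G be the graph on three vertices in which each pair of vertices is joined by exactly k parallel edges. Then the rich flow number of G equals 3k + 1: G admits a rich (3k + 1)-flow, and G admits no rich (3k)-flow. -/
open Classical

noncomputable section

/-- The graph on three vertices in which every pair of vertices is joined by
exactly `k` parallel edges: the edges `(i, j)`, `j : Fin k`, join the vertices
`i` and `i + 1` of `Fin 3`. -/
def triangleMulti (k : ℕ) : Multigraph (Fin 3) (Fin 3 × Fin k) where
  ends := fun e => (e.1, e.1 + 1)
  no_loops := fun e => by
    have h : ∀ i : Fin 3, i ≠ i + 1 := by decide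
    exact h e.1


namespace RFaux

open Finset

/-- Size of the special initial block of columns: `0` if `k` even, `3` if odd. -/
def bsize (k : ℕ) : ℕ := if k % 2 = 0 then 0 else 3

/-- The flow value on edge `(i, j)` of the triple-`k`-bond. -/
def fval (k i j : ℕ) : ℤ :=
  if j < bsize k then 3*(j:ℤ)+1+(((i+j) % 3 : ℕ) : ℤ)
  else if j % 2 = k % 2 then 3*(j:ℤ)+1+(i:ℤ) else 3*(j:ℤ)+3-(i:ℤ)

lemma fval_bounds (k i j : ℕ) (hi : i < 3) :
    3*(j:ℤ)+1 ≤ fval k i j ∧ fval k i j ≤ 3*(j:ℤ)+3 := by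
  unfold fval
  have h3 : (i+j) % 3 < 3 := Nat.mod_lt _ (by norm_num)
  split_ifs <;> constructor <;> push_cast <;> omega

lemma fval_inj (k : ℕ) {i i' j j' : ℕ} (hi : i < 3) (hi' : i' < 3)
    (h : fval k i j = fval k i' j') : i = i' ∧ j = j' := by
  obtain ⟨l1, u1⟩ := fval_bounds k i j hi
  obtain ⟨l2, u2⟩ := fval_bounds k i' j' hi'
  have A : 3*(j:ℤ)+1 ≤ 3*(j':ℤ)+3 := by rw [h] at l1; exact le_trans l1 u2
  have B : 3*(j':ℤ)+1 ≤ 3*(j:ℤ)+3 := by rw [← h] at l2; exact le_trans l2 u1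
  have hjj : j = j' := by omega
  subst hjj
  refine ⟨?_, rfl⟩
  unfold fval at h
  split_ifs at h <;> [skip; skip; skip] <;> push_cast at h <;> omega

lemma sumEps (n : ℕ) :
    ∑ t ∈ Finset.range (2*n), (if t % 2 = 0 then (1:ℤ) else -1) = 0 := by
  induction n with
  | zero => simp
  | succ n ih =>
    have h2 : 2*(n+1) = (2*n)+1+1 := by ring
    rw [h2, Finset.sum_range_succ, Finset.sum_range_succ, ih]
    have ha : (2*n) % 2 = 0 := by omega
    have hb : (2*n+1) % 2 = 1 := by omega
    simp [ha, hb]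

lemma bsize_le (k : ℕ) (hk : 1 < k) : bsize k ≤ k := by
  unfold bsize; split_ifs <;> omega

lemma bsize_mod (k : ℕ) : bsize k % 2 = k % 2 := by
  unfold bsize; split_ifs <;> omega

lemma sumEps_Ico (k : ℕ) (hk : 1 < k) :
    ∑ j ∈ Finset.Ico (bsize k) k, (if j % 2 = k % 2 then (1:ℤ) else -1) = 0 := by
  have hb := bsize_mod k
  have hle := bsize_le k hk
  rw [Finset.sum_Ico_eq_sum_range]
  have hcongr : ∀ t ∈ Finset.range (k - bsize k),
      (if (bsize k + t) % 2 = k % 2 then (1:ℤ) else -1)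
        = (if t % 2 = 0 then (1:ℤ) else -1) := by
    intro t _
    split_ifs <;> first | rfl | omega
  rw [Finset.sum_congr rfl hcongr,
    show k - bsize k = 2*((k - bsize k)/2) by omega]
  exact sumEps _

lemma special_part (k : ℕ) {i i' : ℕ} (hi : i < 3) (hi' : i' < 3) :
    ∑ j ∈ Finset.range (bsize k), fval k i j
      = ∑ j ∈ Finset.range (bsize k), fval k i' j := by
  by_cases hp : k % 2 = 0
  · simp [bsize, hp]
  · have hb : bsize k = 3 := by simp [bsize, hp]
    rw [hb]
    have key : ∀ m, m < 3 → ∑ j ∈ Finset.range 3, fval k m j = 15 := by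
      intro m hm
      rw [Finset.sum_range_succ, Finset.sum_range_succ, Finset.sum_range_succ,
        Finset.sum_range_zero]
      have e0 : fval k m 0 = 3*(0:ℤ)+1+(((m+0) % 3 : ℕ) : ℤ) := by
        unfold fval; rw [if_pos (by omega)]; norm_num
      have e1 : fval k m 1 = 3*(1:ℤ)+1+(((m+1) % 3 : ℕ) : ℤ) := by
        unfold fval; rw [if_pos (by omega)]; norm_num
      have e2 : fval k m 2 = 3*(2:ℤ)+1+(((m+2) % 3 : ℕ) : ℤ) := by
        unfold fval; rw [if_pos (by omega)]; norm_num
      rw [e0, e1, e2]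
      interval_cases m <;> norm_num
    rw [key i hi, key i' hi']

lemma row_sum_eq (k : ℕ) (hk : 1 < k) {i i' : ℕ} (hi : i < 3) (hi' : i' < 3) :
    ∑ j ∈ Finset.range k, fval k i j = ∑ j ∈ Finset.range k, fval k i' j := by
  have hle := bsize_le k hk
  rw [← Finset.sum_range_add_sum_Ico (fval k i) hle,
    ← Finset.sum_range_add_sum_Ico (fval k i') hle]
  have hico : ∑ j ∈ Finset.Ico (bsize k) k, fval k i j
      = ∑ j ∈ Finset.Ico (bsize k) k, fval k i' j := by
    have hdiff : ∑ j ∈ Finset.Ico (bsize k) k, (fval k i j - fval k i' j)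
        = ((i:ℤ) - i') * ∑ j ∈ Finset.Ico (bsize k) k,
            (if j % 2 = k % 2 then (1:ℤ) else -1) := by
      rw [Finset.mul_sum]
      apply Finset.sum_congr rfl
      intro j hj
      have hjb : ¬ j < bsize k := by
        have := (Finset.mem_Ico.mp hj).1; omega
      unfold fval
      rw [if_neg hjb, if_neg hjb]
      split_ifs <;> ring
    rw [sumEps_Ico k hk, mul_zero, Finset.sum_sub_distrib] at hdiff
    linarith
  rw [special_part k hi hi', hico]

end RFaux

open Multigraph in
/-- The rich flow number of the triple-`k`-bond equals
`3k + 1`:  it admits a rich `(3k + 1)`-flow, but no rich `3k`-flow. -/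
theorem richFlowNumber_triangleMulti (k : ℕ) (hk : 1 < k) :
    (∃ φ, (triangleMulti k).IsRichFlow (3 * (k : ℤ) + 1) φ) ∧
    ¬ ∃ φ, (triangleMulti k).IsRichFlow (3 * (k : ℤ)) φ := by
  constructor
  · refine ⟨fun e => RFaux.fval k (e.1 : ℕ) (e.2 : ℕ), ?_, ?_, ?_, ?_⟩
    · -- flow condition
      intro v
      rw [Fintype.sum_prod_type, Fintype.sum_prod_type,
        Fin.sum_univ_three, Fin.sum_univ_three]
      have pull : ∀ (c : Prop) (_ : Decidable c) (g : Fin k → ℤ),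
          (∑ j : Fin k, if c then g j else 0) = if c then ∑ j : Fin k, g j else 0 := by
        intro c _ g; split_ifs <;> simp
      have pull2 : ∀ (c : Prop) (_ : Decidable c) (g : Fin k → ℤ),
          (∑ j : Fin k, if c then g j else 0) = if c then ∑ j : Fin k, g j else 0 :=
        pull
      simp only [triangleMulti, pull2]
      have hS : ∀ a b : ℕ, a < 3 → b < 3 →
          (∑ j : Fin k, RFaux.fval k a (j : ℕ)) = ∑ j : Fin k, RFaux.fval k b (j : ℕ) := by
        intro a b ha hb
        rw [Fin.sum_univ_eq_sum_range (RFaux.fval k a) k,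
          Fin.sum_univ_eq_sum_range (RFaux.fval k b) k]
        exact RFaux.row_sum_eq k hk ha hb
      fin_cases v <;> simp
      · exact hS 2 0 (by norm_num) (by norm_num)
      · exact hS 0 1 (by norm_num) (by norm_num)
      · exact hS 1 2 (by norm_num) (by norm_num)
    · -- nowhere zero
      intro e h
      have h' : RFaux.fval k (e.1 : ℕ) (e.2 : ℕ) = 0 := h
      obtain ⟨l, _⟩ := RFaux.fval_bounds k (e.1 : ℕ) (e.2 : ℕ) e.1.isLt
      rw [h'] at l
      have : (0:ℤ) ≤ ((e.2 : ℕ) : ℤ) := Int.natCast_nonneg _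
      linarith
    · -- bound
      intro e
      obtain ⟨l, u⟩ := RFaux.fval_bounds k (e.1 : ℕ) (e.2 : ℕ) e.1.isLt
      have hj : ((e.2 : ℕ) : ℤ) < (k : ℤ) := by exact_mod_cast e.2.isLt
      have hj0 : (0:ℤ) ≤ ((e.2 : ℕ) : ℤ) := Int.natCast_nonneg _
      show |RFaux.fval k (e.1 : ℕ) (e.2 : ℕ)| < 3*(k:ℤ)+1
      rw [abs_lt]
      constructor <;> linarith
    · -- distinct absolute values on adjacent edges
      rintro e f ⟨hne, -⟩ habs0
      have habs : |RFaux.fval k (e.1 : ℕ) (e.2 : ℕ)|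
          = |RFaux.fval k (f.1 : ℕ) (f.2 : ℕ)| := habs0
      obtain ⟨l1, -⟩ := RFaux.fval_bounds k (e.1 : ℕ) (e.2 : ℕ) e.1.isLt
      obtain ⟨l2, -⟩ := RFaux.fval_bounds k (f.1 : ℕ) (f.2 : ℕ) f.1.isLt
      have p1 : (0:ℤ) < RFaux.fval k (e.1 : ℕ) (e.2 : ℕ) := by
        have : (0:ℤ) ≤ ((e.2 : ℕ) : ℤ) := Int.natCast_nonneg _; linarith
      have p2 : (0:ℤ) < RFaux.fval k (f.1 : ℕ) (f.2 : ℕ) := by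
        have : (0:ℤ) ≤ ((f.2 : ℕ) : ℤ) := Int.natCast_nonneg _; linarith
      rw [abs_of_pos p1, abs_of_pos p2] at habs
      obtain ⟨h1, h2⟩ := RFaux.fval_inj k e.1.isLt f.1.isLt habs
      exact hne (Prod.ext (Fin.ext h1) (Fin.ext h2))
  · rintro ⟨φ, hflow, hnz, hbd, hadj⟩
    have hadj' : ∀ e f : Fin 3 × Fin k, e ≠ f → (triangleMulti k).Adjacent e f := by
      intro e f hne
      refine ⟨hne, ?_⟩
      have h3 : ∀ a b : Fin 3, ∃ v : Fin 3,
          (a = v ∨ a + 1 = v) ∧ (b = v ∨ b + 1 = v) := by decide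
      obtain ⟨v, hv1, hv2⟩ := h3 e.1 f.1
      exact ⟨v, hv1, hv2⟩
    have hmaps : ∀ e : Fin 3 × Fin k,
        (φ e).natAbs ∈ Finset.Icc 1 (3*k - 1) := by
      intro e
      have h1 := hnz e
      have h2 := hbd e
      rw [Int.abs_eq_natAbs] at h2
      rw [Finset.mem_Icc]
      omega
    have hinj : Set.InjOn (fun e => (φ e).natAbs)
        ↑(Finset.univ : Finset (Fin 3 × Fin k)) := by
      intro e _ f _ h
      by_contra hne
      exact hadj e f (hadj' e f hne)
        (by rw [Int.abs_eq_natAbs, Int.abs_eq_natAbs]; exact_mod_cast h)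
    have hcard := Finset.card_le_card_of_injOn _ (fun e _ => hmaps e) hinj
    rw [Finset.card_univ, Nat.card_Icc] at hcard
    simp [Fintype.card_prod] at hcard
    omega
end
end

section
/- Let G be a rich flow admissible graph and let {e_1, e_2} be a 2-edge-cut of G separating subgraphs G_1 and G_2, where e_i has endvertex u_i in G_1 and endvertex v_i in G_2 (i = 1, 2), u_1 ≠ u_2 and v_1 ≠ v_2. Let G'_1 be the graph obtained from G_1 by adding a new edge u_1u_2. Then G'_1 is rich flow admissible. -/
open Classical

noncomputable section

namespace Multigraph

variable {V E : Type}

/-- The edge `e` crosses the vertex set `W`. -/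
def Crosses (G : Multigraph V E) (W : Set V) (e : E) : Prop :=
  ¬ (((G.ends e).1 ∈ W) ↔ ((G.ends e).2 ∈ W))

/-- The pair `{e₁, e₂}` separates the graph along the vertex set `W`:
`e₁` and `e₂` are exactly the edges with one endvertex in `W` and the other
outside `W`; thus deleting them leaves the disjoint union of the subgraph
induced on `W` and the subgraph induced on its complement. -/
def SeparatesAlong (G : Multigraph V E) (e₁ e₂ : E) (W : Set V) : Prop :=
  G.Crosses W e₁ ∧ G.Crosses W e₂ ∧ ∀ e, e ≠ e₁ → e ≠ e₂ → ¬ G.Crosses W e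

/-- The subgraph of `G` induced on the vertex set `W`, together with one new
edge joining `u₁` and `u₂` (two distinct vertices of `W`). -/
def addEdgeRestrict (G : Multigraph V E) (W : Set V) (u₁ u₂ : V)
    (hu₁ : u₁ ∈ W) (hu₂ : u₂ ∈ W) (hne : u₁ ≠ u₂) :
    Multigraph W ({e : E // (G.ends e).1 ∈ W ∧ (G.ends e).2 ∈ W} ⊕ Unit) where
  ends := fun x =>
    match x with
    | .inl e => (⟨(G.ends e.1).1, e.2.1⟩, ⟨(G.ends e.1).2, e.2.2⟩)
    | .inr _ => (⟨u₁, hu₁⟩, ⟨u₂, hu₂⟩)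
  no_loops := fun x =>
    match x with
    | .inl e => fun h => G.no_loops e.1 (congrArg Subtype.val h)
    | .inr _ => fun h => hne (congrArg Subtype.val h)

end Multigraph


namespace Multigraph

variable {V E : Type}

lemma reachableAvoiding_symmA (G : Multigraph V E) {S : Set E} {u v : V}
    (h : G.ReachableAvoiding S u v) : G.ReachableAvoiding S v u := by
  induction h with
  | refl => exact .refl
  | tail _ step ih =>
    obtain ⟨e, he, h'⟩ := step
    exact Relation.ReflTransGen.head ⟨e, he, h'.symm⟩ ih

lemma reachableAvoiding_monoA (G : Multigraph V E) {S T : Set E} (hST : S ⊆ T) {u v : V}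
    (h : G.ReachableAvoiding T u v) : G.ReachableAvoiding S u v := by
  induction h with
  | refl => exact .refl
  | tail _ step ih =>
    obtain ⟨e, he, h'⟩ := step
    exact ih.tail ⟨e, fun hs => he (hST hs), h'⟩

end Multigraph

lemma reflTransGen_mapA {α β : Type*} {r : α → α → Prop} {s : β → β → Prop} (f : α → β)
    (h : ∀ x y, r x y → Relation.ReflTransGen s (f x) (f y)) :
    ∀ {u v}, Relation.ReflTransGen r u v → Relation.ReflTransGen s (f u) (f v) := by
  intro u v H
  induction H with
  | refl => exact .refl
  | tail _ step ih => exact ih.trans (h _ _ step)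

open Multigraph in
/-- Let `{e₁, e₂}` be a 2-edge-cut of a rich flow admissible
graph `G` separating the subgraphs `G₁` (induced on `V₁`) and `G₂` (induced on
the complement of `V₁`), where `eᵢ` has endvertex `uᵢ` in `G₁` and endvertex
`vᵢ` in `G₂`, with `u₁ ≠ u₂` and `v₁ ≠ v₂`.  Then the graph `G₁'` obtained
from `G₁` by adding a new edge `u₁u₂` is rich flow admissible. -/
theorem addEdgeRestrict_richFlowAdmissible {V E : Type} (G : Multigraph V E)
    (hG : G.RichFlowAdmissible) (e₁ e₂ : E) (V₁ : Set V) (u₁ u₂ v₁ v₂ : V)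
    (hcut : G.IsTwoEdgeCut e₁ e₂)
    (hsep : G.SeparatesAlong e₁ e₂ V₁)
    (he₁ : G.ends e₁ = (u₁, v₁) ∨ G.ends e₁ = (v₁, u₁))
    (he₂ : G.ends e₂ = (u₂, v₂) ∨ G.ends e₂ = (v₂, u₂))
    (hu₁ : u₁ ∈ V₁) (hu₂ : u₂ ∈ V₁) (hv₁ : v₁ ∉ V₁) (hv₂ : v₂ ∉ V₁)
    (huu : u₁ ≠ u₂) (hvv : v₁ ≠ v₂) :
    (G.addEdgeRestrict V₁ u₁ u₂ hu₁ hu₂ huu).RichFlowAdmissible := by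
  classical
  obtain ⟨hbl, hnc⟩ := hG
  obtain ⟨h12, hnb₁, hnb₂, -⟩ := hcut
  obtain ⟨hcr₁, hcr₂, honly⟩ := hsep
  set G' := G.addEdgeRestrict V₁ u₁ u₂ hu₁ hu₂ huu with hG'def
  have ends_inl : ∀ (e : E) (hE : (G.ends e).1 ∈ V₁ ∧ (G.ends e).2 ∈ V₁),
      G'.ends (Sum.inl ⟨e, hE⟩) = (⟨(G.ends e).1, hE.1⟩, ⟨(G.ends e).2, hE.2⟩) :=
    fun e hE => rfl
  have ends_inr : G'.ends (Sum.inr ()) = (⟨u₁, hu₁⟩, ⟨u₂, hu₂⟩) := rfl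
  -- classification of a single step of a walk
  have stepCases : ∀ {e : E} {x y : V}, (G.ends e = (x, y) ∨ G.ends e = (y, x)) →
      (e ≠ e₁ ∧ e ≠ e₂ ∧ (x ∈ V₁ ↔ y ∈ V₁)) ∨
      (e = e₁ ∧ ((x = u₁ ∧ y = v₁) ∨ (x = v₁ ∧ y = u₁))) ∨
      (e = e₂ ∧ ((x = u₂ ∧ y = v₂) ∨ (x = v₂ ∧ y = u₂))) := by
    intro e x y hxy
    by_cases h1 : e = e₁
    · subst h1
      refine Or.inr (Or.inl ⟨rfl, ?_⟩)
      rcases he₁ with h | h <;> rcases hxy with h' | h'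
      · rw [h] at h'; injection h' with ha hb; exact Or.inl ⟨ha.symm, hb.symm⟩
      · rw [h] at h'; injection h' with ha hb; exact Or.inr ⟨hb.symm, ha.symm⟩
      · rw [h] at h'; injection h' with ha hb; exact Or.inr ⟨ha.symm, hb.symm⟩
      · rw [h] at h'; injection h' with ha hb; exact Or.inl ⟨hb.symm, ha.symm⟩
    · by_cases h2 : e = e₂
      · subst h2
        refine Or.inr (Or.inr ⟨rfl, ?_⟩)
        rcases he₂ with h | h <;> rcases hxy with h' | h'
        · rw [h] at h'; injection h' with ha hb; exact Or.inl ⟨ha.symm, hb.symm⟩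
        · rw [h] at h'; injection h' with ha hb; exact Or.inr ⟨hb.symm, ha.symm⟩
        · rw [h] at h'; injection h' with ha hb; exact Or.inr ⟨ha.symm, hb.symm⟩
        · rw [h] at h'; injection h' with ha hb; exact Or.inl ⟨hb.symm, ha.symm⟩
      · refine Or.inl ⟨h1, h2, ?_⟩
        have hx := honly e h1 h2
        unfold Multigraph.Crosses at hx
        rw [not_not] at hx
        rcases hxy with h | h
        · rw [h] at hx; exact hx
        · rw [h] at hx; exact hx.symm
  -- projection onto V₁ with base point b
  let π : V₁ → V → V₁ := fun b x => if hx : x ∈ V₁ then ⟨x, hx⟩ else b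
  have hπ_mem : ∀ (b : V₁) (x : V) (hx : x ∈ V₁), π b x = ⟨x, hx⟩ :=
    fun b x hx => dif_pos hx
  have hπ_not : ∀ (b : V₁) (x : V), x ∉ V₁ → π b x = b :=
    fun b x hx => dif_neg hx
  -- transporting walks from G to G'
  have transport : ∀ (b : V₁) (S : Set E)
      (S' : Set ({e : E // (G.ends e).1 ∈ V₁ ∧ (G.ends e).2 ∈ V₁} ⊕ Unit)),
      (∀ (e : E) (hE : (G.ends e).1 ∈ V₁ ∧ (G.ends e).2 ∈ V₁),
        e ∉ S → Sum.inl ⟨e, hE⟩ ∉ S') →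
      (e₁ ∉ S → G'.ReachableAvoiding S' ⟨u₁, hu₁⟩ b) →
      (e₂ ∉ S → G'.ReachableAvoiding S' ⟨u₂, hu₂⟩ b) →
      ∀ {x y : V}, G.ReachableAvoiding S x y →
        G'.ReachableAvoiding S' (π b x) (π b y) := by
    intro b S S' h_inl hsim₁ hsim₂ x y hxy
    refine reflTransGen_mapA (π b) ?_ hxy
    rintro x y ⟨e, heS, hends⟩
    rcases stepCases hends with ⟨hne1, hne2, hiff⟩ | ⟨rfl, hforms⟩ | ⟨rfl, hforms⟩
    · by_cases hx : x ∈ V₁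
      · have hy : y ∈ V₁ := hiff.mp hx
        rw [hπ_mem b x hx, hπ_mem b y hy]
        rcases hends with h | h
        · have hE : (G.ends e).1 ∈ V₁ ∧ (G.ends e).2 ∈ V₁ := by rw [h]; exact ⟨hx, hy⟩
          refine Relation.ReflTransGen.single ⟨Sum.inl ⟨e, hE⟩, h_inl e hE heS, Or.inl ?_⟩
          rw [ends_inl]
          have h1 : (G.ends e).1 = x := by rw [h]
          have h2 : (G.ends e).2 = y := by rw [h]
          simp only [Prod.mk.injEq]
          exact ⟨Subtype.ext h1, Subtype.ext h2⟩
        · have hE : (G.ends e).1 ∈ V₁ ∧ (G.ends e).2 ∈ V₁ := by rw [h]; exact ⟨hy, hx⟩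
          refine Relation.ReflTransGen.single ⟨Sum.inl ⟨e, hE⟩, h_inl e hE heS, Or.inr ?_⟩
          rw [ends_inl]
          have h1 : (G.ends e).1 = y := by rw [h]
          have h2 : (G.ends e).2 = x := by rw [h]
          simp only [Prod.mk.injEq]
          exact ⟨Subtype.ext h1, Subtype.ext h2⟩
      · have hy : y ∉ V₁ := fun hy => hx (hiff.mpr hy)
        rw [hπ_not b x hx, hπ_not b y hy]
    · rcases hforms with ⟨hx', hy'⟩ | ⟨hx', hy'⟩
      · rw [hx', hy', hπ_mem b u₁ hu₁, hπ_not b v₁ hv₁]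
        exact hsim₁ heS
      · rw [hx', hy', hπ_not b v₁ hv₁, hπ_mem b u₁ hu₁]
        exact Multigraph.reachableAvoiding_symmA G' (hsim₁ heS)
    · rcases hforms with ⟨hx', hy'⟩ | ⟨hx', hy'⟩
      · rw [hx', hy', hπ_mem b u₂ hu₂, hπ_not b v₂ hv₂]
        exact hsim₂ heS
      · rw [hx', hy', hπ_not b v₂ hv₂, hπ_mem b u₂ hu₂]
        exact Multigraph.reachableAvoiding_symmA G' (hsim₂ heS)
  -- lifting walks from G' to G
  have lift : ∀ (S : Set E)
      (S' : Set ({e : E // (G.ends e).1 ∈ V₁ ∧ (G.ends e).2 ∈ V₁} ⊕ Unit)),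
      (∀ (e : E) (hE : (G.ends e).1 ∈ V₁ ∧ (G.ends e).2 ∈ V₁),
        Sum.inl ⟨e, hE⟩ ∉ S' → e ∉ S) →
      (Sum.inr () ∉ S' → G.ReachableAvoiding S u₁ u₂) →
      ∀ {x y : V₁}, G'.ReachableAvoiding S' x y →
        G.ReachableAvoiding S x.val y.val := by
    intro S S' h_inl h_inr x y hxy
    refine reflTransGen_mapA Subtype.val ?_ hxy
    rintro x y ⟨f, hf, hends⟩
    rcases f with ⟨e, hE⟩ | ⟨⟩
    · rw [ends_inl] at hends
      refine Relation.ReflTransGen.single ⟨e, h_inl e hE hf, ?_⟩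
      rcases hends with h | h
      · exact Or.inl (congrArg (fun p : V₁ × V₁ => (p.1.val, p.2.val)) h)
      · exact Or.inr (congrArg (fun p : V₁ × V₁ => (p.1.val, p.2.val)) h)
    · rw [ends_inr] at hends
      rcases hends with h | h
      · have h1 : u₁ = x.val := congrArg (fun p : V₁ × V₁ => p.1.val) h
        have h2 : u₂ = y.val := congrArg (fun p : V₁ × V₁ => p.2.val) h
        have := h_inr hf
        rw [h1, h2] at this
        exact this
      · have h1 : u₁ = y.val := congrArg (fun p : V₁ × V₁ => p.1.val) h
        have h2 : u₂ = x.val := congrArg (fun p : V₁ × V₁ => p.2.val) h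
        have := Multigraph.reachableAvoiding_symmA G (h_inr hf)
        rw [h1, h2] at this
        exact this
  -- the two sides of a 2-edge-cut are internally connected
  have hbase₂ : G.ReachableAvoiding {e₂} u₂ v₂ := by
    have h0 : G.ReachableAvoiding {e₂} (G.ends e₂).1 (G.ends e₂).2 := not_not.mp hnb₂
    rcases he₂ with h | h
    · rw [h] at h0; exact h0
    · rw [h] at h0; exact Multigraph.reachableAvoiding_symmA G h0
  have hL1 : G.ReachableAvoiding {e₁, e₂} u₂ u₁ := by
    have key : ∀ x y, G.adjVia {e₂} x y →
        Relation.ReflTransGen (G.adjVia {e₁, e₂})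
          ((fun x => if x ∈ V₁ then x else u₁) x)
          ((fun x => if x ∈ V₁ then x else u₁) y) := by
      rintro x y ⟨e, heS, hends⟩
      rcases stepCases hends with ⟨hne1, hne2, hiff⟩ | ⟨rfl, hf⟩ | ⟨rfl, hf⟩
      · by_cases hx : x ∈ V₁
        · have hy : y ∈ V₁ := hiff.mp hx
          simp only [if_pos hx, if_pos hy]
          exact Relation.ReflTransGen.single ⟨e, by simp [hne1, hne2], hends⟩
        · have hy : y ∉ V₁ := fun h => hx (hiff.mpr h)
          simp only [if_neg hx, if_neg hy]
          exact Relation.ReflTransGen.refl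
      · rcases hf with ⟨hx', hy'⟩ | ⟨hx', hy'⟩
        · rw [hx', hy']
          simp only [if_pos hu₁, if_neg hv₁]
          exact Relation.ReflTransGen.refl
        · rw [hx', hy']
          simp only [if_neg hv₁, if_pos hu₁]
          exact Relation.ReflTransGen.refl
      · simp at heS
    have := reflTransGen_mapA (fun x => if x ∈ V₁ then x else u₁) key hbase₂
    simp only [if_pos hu₂, if_neg hv₂] at this
    exact this
  constructor
  · -- Bridgeless
    rintro (⟨e, hE⟩ | ⟨⟩) hbr
    · apply hbr
      have h0 : G.ReachableAvoiding {e} (G.ends e).1 (G.ends e).2 := not_not.mp (hbl e)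
      have h2step : G'.ReachableAvoiding {Sum.inl ⟨e, hE⟩} ⟨u₂, hu₂⟩ ⟨u₁, hu₁⟩ := by
        refine Relation.ReflTransGen.single ⟨Sum.inr (), ?_, Or.inr ends_inr⟩
        simp
      have h_inl : ∀ (e' : E) (hE' : (G.ends e').1 ∈ V₁ ∧ (G.ends e').2 ∈ V₁),
          e' ∉ ({e} : Set E) → Sum.inl ⟨e', hE'⟩ ∉ ({Sum.inl ⟨e, hE⟩} : Set ({e : E // (G.ends e).1 ∈ V₁ ∧ (G.ends e).2 ∈ V₁} ⊕ Unit)) := by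
        intro e' hE' he' hc
        simp only [Set.mem_singleton_iff, Sum.inl.injEq, Subtype.mk.injEq] at hc
        exact he' (Set.mem_singleton_iff.mpr hc)
      have := transport ⟨u₁, hu₁⟩ {e} {Sum.inl ⟨e, hE⟩} h_inl
        (fun _ => Relation.ReflTransGen.refl) (fun _ => h2step) h0
      rw [hπ_mem _ _ hE.1, hπ_mem _ _ hE.2] at this
      exact this
    · apply hbr
      have h_inl : ∀ (e' : E) (hE' : (G.ends e').1 ∈ V₁ ∧ (G.ends e').2 ∈ V₁),
          e' ∉ ({e₁, e₂} : Set E) → Sum.inl ⟨e', hE'⟩ ∉ ({Sum.inr ()} : Set ({e : E // (G.ends e).1 ∈ V₁ ∧ (G.ends e).2 ∈ V₁} ⊕ Unit)) := by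
        intro e' hE' _ hc
        simp at hc
      have := transport ⟨u₁, hu₁⟩ {e₁, e₂} {Sum.inr ()} h_inl
        (fun h => absurd (by simp) h) (fun h => absurd (by simp) h)
        (Multigraph.reachableAvoiding_symmA G hL1)
      rw [hπ_mem _ _ hu₁, hπ_mem _ _ hu₂] at this
      exact this
  · -- no 2-edge-cut with adjacent edges
    rintro f₁ f₂ ⟨hne, hnb₁', hnb₂', a, b, hab, hnab⟩ ⟨w, hw₁, hw₂⟩
    have habG : G.ReachableAvoiding ∅ a.val b.val :=
      lift ∅ ∅ (fun _ _ _ => Set.notMem_empty _)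
        (fun _ => Multigraph.reachableAvoiding_monoA G (Set.empty_subset _)
          (Multigraph.reachableAvoiding_symmA G hL1)) hab
    have hinc : ∀ (g : {e : E // (G.ends e).1 ∈ V₁ ∧ (G.ends e).2 ∈ V₁}),
        G'.incident w (Sum.inl g) → G.incident w.val g.val := by
      intro g hwf
      rcases hwf with h | h
      · exact Or.inl (congrArg Subtype.val h)
      · exact Or.inr (congrArg Subtype.val h)
    have caseB : ∀ (g : {e : E // (G.ends e).1 ∈ V₁ ∧ (G.ends e).2 ∈ V₁}),
        ¬ G'.ReachableAvoiding {Sum.inl g, Sum.inr ()} a b →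
        G.incident w.val g.val → G'.incident w (Sum.inr ()) → False := by
      intro g hnab' hincg hincr
      have hw : w.val = u₁ ∨ w.val = u₂ := by
        rcases hincr with h | h
        · exact Or.inl (congrArg Subtype.val h).symm
        · exact Or.inr (congrArg Subtype.val h).symm
      have hgne₁ : g.val ≠ e₁ := by
        intro h
        have h2 := g.2
        rw [h] at h2
        rcases he₁ with h' | h' <;> rw [h'] at h2
        · exact hv₁ h2.2
        · exact hv₁ h2.1
      have hgne₂ : g.val ≠ e₂ := by
        intro h
        have h2 := g.2
        rw [h] at h2
        rcases he₂ with h' | h' <;> rw [h'] at h2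
        · exact hv₂ h2.2
        · exact hv₂ h2.1
      rcases hw with hw | hw
      · -- w = u₁; {g, e₁} is a 2-edge-cut of G
        have hcutG : G.IsTwoEdgeCut g.val e₁ := by
          refine ⟨hgne₁, hbl _, hbl _, a.val, b.val, habG, ?_⟩
          intro hreach
          apply hnab'
          have h_inl : ∀ (e' : E) (hE' : (G.ends e').1 ∈ V₁ ∧ (G.ends e').2 ∈ V₁),
              e' ∉ ({g.val, e₁} : Set E) →
              Sum.inl ⟨e', hE'⟩ ∉ ({Sum.inl g, Sum.inr ()} : Set ({e : E // (G.ends e).1 ∈ V₁ ∧ (G.ends e).2 ∈ V₁} ⊕ Unit)) := by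
            intro e' hE' he' hc
            rcases hc with h | h
            · exact he' (Or.inl (congrArg Subtype.val (Sum.inl.inj h)))
            · simp at h
          have := transport ⟨u₂, hu₂⟩ {g.val, e₁} {Sum.inl g, Sum.inr ()} h_inl
            (fun h => absurd (by simp) h) (fun _ => Relation.ReflTransGen.refl) hreach
          rw [hπ_mem _ _ a.2, hπ_mem _ _ b.2] at this
          exact this
        refine hnc g.val e₁ hcutG ⟨u₁, ?_, ?_⟩
        · rw [← hw]; exact hincg
        · rcases he₁ with h | h
          · exact Or.inl (by rw [h])
          · exact Or.inr (by rw [h])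
      · -- w = u₂; {g, e₂} is a 2-edge-cut of G
        have hcutG : G.IsTwoEdgeCut g.val e₂ := by
          refine ⟨hgne₂, hbl _, hbl _, a.val, b.val, habG, ?_⟩
          intro hreach
          apply hnab'
          have h_inl : ∀ (e' : E) (hE' : (G.ends e').1 ∈ V₁ ∧ (G.ends e').2 ∈ V₁),
              e' ∉ ({g.val, e₂} : Set E) →
              Sum.inl ⟨e', hE'⟩ ∉ ({Sum.inl g, Sum.inr ()} : Set ({e : E // (G.ends e).1 ∈ V₁ ∧ (G.ends e).2 ∈ V₁} ⊕ Unit)) := by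
            intro e' hE' he' hc
            rcases hc with h | h
            · exact he' (Or.inl (congrArg Subtype.val (Sum.inl.inj h)))
            · simp at h
          have := transport ⟨u₁, hu₁⟩ {g.val, e₂} {Sum.inl g, Sum.inr ()} h_inl
            (fun _ => Relation.ReflTransGen.refl) (fun h => absurd (by simp) h) hreach
          rw [hπ_mem _ _ a.2, hπ_mem _ _ b.2] at this
          exact this
        refine hnc g.val e₂ hcutG ⟨u₂, ?_, ?_⟩
        · rw [← hw]; exact hincg
        · rcases he₂ with h | h
          · exact Or.inl (by rw [h])
          · exact Or.inr (by rw [h])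
    rcases f₁ with g₁ | ⟨⟩ <;> rcases f₂ with g₂ | ⟨⟩
    · -- both old edges: {g₁, g₂} is a 2-edge-cut of G
      have hgg : g₁.val ≠ g₂.val := fun h => hne (congrArg Sum.inl (Subtype.ext h))
      have hcutG : G.IsTwoEdgeCut g₁.val g₂.val := by
        refine ⟨hgg, hbl _, hbl _, a.val, b.val, habG, ?_⟩
        intro hreach
        apply hnab
        have h_inl : ∀ (e' : E) (hE' : (G.ends e').1 ∈ V₁ ∧ (G.ends e').2 ∈ V₁),
            e' ∉ ({g₁.val, g₂.val} : Set E) →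
            Sum.inl ⟨e', hE'⟩ ∉ ({Sum.inl g₁, Sum.inl g₂} : Set ({e : E // (G.ends e).1 ∈ V₁ ∧ (G.ends e).2 ∈ V₁} ⊕ Unit)) := by
          intro e' hE' he' hc
          rcases hc with h | h
          · exact he' (Or.inl (congrArg Subtype.val (Sum.inl.inj h)))
          · exact he' (Or.inr (congrArg Subtype.val (Sum.inl.inj h)))
        have h2step : G'.ReachableAvoiding {Sum.inl g₁, Sum.inl g₂} ⟨u₂, hu₂⟩ ⟨u₁, hu₁⟩ := by
          refine Relation.ReflTransGen.single ⟨Sum.inr (), ?_, Or.inr ends_inr⟩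
          simp
        have := transport ⟨u₁, hu₁⟩ {g₁.val, g₂.val} {Sum.inl g₁, Sum.inl g₂} h_inl
          (fun _ => Relation.ReflTransGen.refl) (fun _ => h2step) hreach
        rw [hπ_mem _ _ a.2, hπ_mem _ _ b.2] at this
        exact this
      exact hnc g₁.val g₂.val hcutG ⟨w.val, hinc g₁ hw₁, hinc g₂ hw₂⟩
    · exact caseB g₁ hnab (hinc g₁ hw₁) hw₂
    · rw [Set.pair_comm] at hnab
      exact caseB g₂ hnab (hinc g₂ hw₂) hw₁
    · exact hne rfl
end
end

section
/- Let G be a rich flow admissible graph and let {e_1, e_2} be a 2-edge-cut of G separating subgraphs G_1 and G_2, chosen so that G_2 is as small as possible (no 2-edge-cut of G separates a subgraph properly contained in G_2), where e_i has endvertex v_i in G_2 (i = 1, 2) and v_1 ≠ v_2. Let G'_2 be the graph obtained from G_2 by adding a new edge v_1v_2. Then G'_2 is 3-edge-connected. -/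
open Classical

noncomputable section

namespace Multigraph

variable {V E : Type}

lemma reach_stay (G : Multigraph V E) {S : Set E} {Y : Set V}
    (hcr : ∀ e, G.Crosses Y e → e ∈ S) {p q : V}
    (h : G.ReachableAvoiding S p q) : p ∈ Y ↔ q ∈ Y := by
  induction h with
  | refl => exact Iff.rfl
  | tail _ hstep ih =>
    obtain ⟨e, heS, hends⟩ := hstep
    have hnc : ¬ G.Crosses Y e := fun hc => heS (hcr e hc)
    simp only [Crosses, not_not] at hnc
    rcases hends with h | h <;> rw [h] at hnc
    · exact ih.trans hnc
    · exact ih.trans hnc.symm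

lemma cut_contra (G : Multigraph V E) (hG : G.RichFlowAdmissible)
    {V₂ : Set V}
    (hmin : ∀ f₁ f₂ (W : Set V), G.IsTwoEdgeCut f₁ f₂ →
      G.SeparatesAlong f₁ f₂ W → ¬ W ⊂ V₂)
    (Y : Set V) (hY : Y ⊆ V₂) (b : V) (hb : b ∈ V₂) (hbY : b ∉ Y)
    (t₁ t₂ : E) (ht₁ : G.Crosses Y t₁)
    (hcr : ∀ e, G.Crosses Y e → e = t₁ ∨ e = t₂) : False := by
  have hnr : ∀ (S : Set E), (∀ e, G.Crosses Y e → e ∈ S) →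
      ¬ G.ReachableAvoiding S (G.ends t₁).1 (G.ends t₁).2 :=
    fun S hS hr => ht₁ (G.reach_stay hS hr)
  by_cases h2 : G.Crosses Y t₂ ∧ t₂ ≠ t₁
  · have hsep' : G.SeparatesAlong t₁ t₂ Y :=
      ⟨ht₁, h2.1, fun e he1 he2 hc => (hcr e hc).elim he1 he2⟩
    have hr0 : G.ReachableAvoiding ∅ (G.ends t₁).1 (G.ends t₁).2 :=
      Relation.ReflTransGen.single ⟨t₁, Set.notMem_empty t₁, Or.inl Prod.mk.eta.symm⟩
    have hcut' : G.IsTwoEdgeCut t₁ t₂ :=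
      ⟨h2.2.symm, hG.1 t₁, hG.1 t₂, (G.ends t₁).1, (G.ends t₁).2, hr0,
        hnr {t₁, t₂} (fun e hc => by rcases hcr e hc with h | h <;> simp [h])⟩
    exact hmin t₁ t₂ Y hcut' hsep' ((Set.ssubset_iff_of_subset hY).mpr ⟨b, hb, hbY⟩)
  · have hone : ∀ e, G.Crosses Y e → e ∈ ({t₁} : Set E) := by
      intro e hc
      rcases hcr e hc with h | h
      · simp [h]
      · rcases eq_or_ne t₂ t₁ with h' | h'
        · simp [h, h']
        · exact absurd ⟨h ▸ hc, h'⟩ h2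
    exact hG.1 t₁ (hnr {t₁} hone)

lemma empty_cut_contra (G : Multigraph V E)
    {e₁ e₂ : E} {V₂ : Set V} {u₁ u₂ v₁ v₂ : V}
    (hcut : G.IsTwoEdgeCut e₁ e₂) (hsep : G.SeparatesAlong e₁ e₂ V₂)
    (he₁ : G.ends e₁ = (u₁, v₁) ∨ G.ends e₁ = (v₁, u₁))
    (he₂ : G.ends e₂ = (u₂, v₂) ∨ G.ends e₂ = (v₂, u₂))
    (hu₁ : u₁ ∉ V₂) (hu₂ : u₂ ∉ V₂) (hv₁ : v₁ ∈ V₂) (hv₂ : v₂ ∈ V₂)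
    (hmin : ∀ f₁ f₂ (W : Set V), G.IsTwoEdgeCut f₁ f₂ →
      G.SeparatesAlong f₁ f₂ W → ¬ W ⊂ V₂)
    (Y : Set V) (hY : Y ⊆ V₂) (hv₁Y : v₁ ∉ Y) (hv₂Y : v₂ ∉ Y)
    (a : V) (ha : a ∈ Y)
    (hcr : ∀ e, ¬ G.Crosses Y e) : False := by
  have hc₁ : G.Crosses (V₂ \ Y) e₁ := by
    rcases he₁ with h | h <;> simp [Crosses, h, hu₁, hv₁, hv₁Y]
  have hc₂ : G.Crosses (V₂ \ Y) e₂ := by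
    rcases he₂ with h | h <;> simp [Crosses, h, hu₂, hv₂, hv₂Y]
  have hrest : ∀ e, e ≠ e₁ → e ≠ e₂ → ¬ G.Crosses (V₂ \ Y) e := by
    intro e h1 h2 hc
    have hnV := hsep.2.2 e h1 h2
    have hnY := hcr e
    simp only [Crosses, not_not, Set.mem_diff] at hnV hnY hc
    tauto
  exact hmin e₁ e₂ (V₂ \ Y) hcut ⟨hc₁, hc₂, hrest⟩
    ((Set.ssubset_iff_of_subset Set.diff_subset).mpr ⟨a, hY ha, fun h => h.2 ha⟩)

end Multigraph

open Multigraph in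
/-- Let `{e₁, e₂}` be a 2-edge-cut of a rich flow admissible
graph `G` separating off the subgraph `G₂` (induced on `V₂`), chosen so that
`G₂` is as small as possible: no 2-edge-cut of `G` separates off a subgraph
properly contained in `G₂`.  Let `vᵢ ∈ V₂` be the endvertex of `eᵢ` in `G₂`,
with `v₁ ≠ v₂`.  Then the graph `G₂'` obtained from `G₂` by adding a new edge
`v₁v₂` is 3-edge-connected. -/
theorem addEdgeRestrict_threeEdgeConnected {V E : Type} (G : Multigraph V E)
    (hG : G.RichFlowAdmissible) (e₁ e₂ : E) (V₂ : Set V) (u₁ u₂ v₁ v₂ : V)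
    (hcut : G.IsTwoEdgeCut e₁ e₂)
    (hsep : G.SeparatesAlong e₁ e₂ V₂)
    (he₁ : G.ends e₁ = (u₁, v₁) ∨ G.ends e₁ = (v₁, u₁))
    (he₂ : G.ends e₂ = (u₂, v₂) ∨ G.ends e₂ = (v₂, u₂))
    (hu₁ : u₁ ∉ V₂) (hu₂ : u₂ ∉ V₂) (hv₁ : v₁ ∈ V₂) (hv₂ : v₂ ∈ V₂)
    (hvv : v₁ ≠ v₂)
    (hmin : ∀ f₁ f₂ (W : Set V), G.IsTwoEdgeCut f₁ f₂ →
      G.SeparatesAlong f₁ f₂ W → ¬ W ⊂ V₂) :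
    (G.addEdgeRestrict V₂ v₁ v₂ hv₁ hv₂ hvv).EdgeConnAtLeast 3 := by
  classical
  intro S hS u v
  by_contra hnr
  set G₂ := G.addEdgeRestrict V₂ v₁ v₂ hv₁ hv₂ hvv with hG₂def
  set X' : Set ↥V₂ := {w | G₂.ReachableAvoiding ↑S u w} with hX'def
  have huX' : u ∈ X' := Relation.ReflTransGen.refl
  have hvX' : v ∉ X' := hnr
  have hclose : ∀ e', e' ∉ (S : Set _) →
      ((G₂.ends e').1 ∈ X' ↔ (G₂.ends e').2 ∈ X') := by
    intro e' he'
    constructor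
    · intro h; exact h.tail ⟨e', he', Or.inl Prod.mk.eta.symm⟩
    · intro h; exact h.tail ⟨e', he', Or.inr Prod.mk.eta.symm⟩
  -- the case where v₁ and v₂ are on the same side of the cut
  have key : ∀ (P : ↥V₂ → Prop),
      (∀ e', e' ∉ (S : Set _) → (P (G₂.ends e').1 ↔ P (G₂.ends e').2)) →
      ¬ P ⟨v₁, hv₁⟩ → ¬ P ⟨v₂, hv₂⟩ → (∃ a, P a) → (∃ b, ¬ P b) → False := by
    intro P hP hPv₁ hPv₂ ha' hb'
    obtain ⟨a, hPa⟩ := ha'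
    obtain ⟨b, hPb⟩ := hb'
    set Y : Set V := {x | ∃ h : x ∈ V₂, P ⟨x, h⟩} with hYdef
    have hYsub : Y ⊆ V₂ := fun x hx => hx.1
    have hmemY : ∀ w : ↥V₂, w.val ∈ Y ↔ P w := by
      intro w
      constructor
      · rintro ⟨h, hw⟩; exact hw
      · intro hw; exact ⟨w.2, hw⟩
    have hv₁Y : v₁ ∉ Y := fun h => hPv₁ ((hmemY ⟨v₁, hv₁⟩).mp h)
    have hv₂Y : v₂ ∉ Y := fun h => hPv₂ ((hmemY ⟨v₂, hv₂⟩).mp h)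
    have hu₁Y : u₁ ∉ Y := fun h => hu₁ (hYsub h)
    have hu₂Y : u₂ ∉ Y := fun h => hu₂ (hYsub h)
    have hbY : b.val ∉ Y := fun h => hPb ((hmemY b).mp h)
    have hcrS : ∀ e, G.Crosses Y e →
        ∃ h, Sum.inl (⟨e, h⟩ : {e : E // (G.ends e).1 ∈ V₂ ∧ (G.ends e).2 ∈ V₂}) ∈ S := by
      intro e hc
      have hne₁ : e ≠ e₁ := by
        rintro rfl
        rcases he₁ with h | h <;> simp only [Multigraph.Crosses, h] at hc
        · exact hc (iff_of_false hu₁Y hv₁Y)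
        · exact hc (iff_of_false hv₁Y hu₁Y)
      have hne₂ : e ≠ e₂ := by
        rintro rfl
        rcases he₂ with h | h <;> simp only [Multigraph.Crosses, h] at hc
        · exact hc (iff_of_false hu₂Y hv₂Y)
        · exact hc (iff_of_false hv₂Y hu₂Y)
      have hnV := hsep.2.2 e hne₁ hne₂
      simp only [Multigraph.Crosses, not_not] at hnV
      have hends : (G.ends e).1 ∈ V₂ ∧ (G.ends e).2 ∈ V₂ := by
        by_cases h1 : (G.ends e).1 ∈ Y
        · exact ⟨hYsub h1, hnV.mp (hYsub h1)⟩
        · have h2 : (G.ends e).2 ∈ Y := by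
            by_contra h2
            exact hc (iff_of_false h1 h2)
          exact ⟨hnV.mpr (hYsub h2), hYsub h2⟩
      refine ⟨hends, ?_⟩
      by_contra hnS
      have hiff := hP (Sum.inl ⟨e, hends⟩) (by simpa using hnS)
      exact hc (((hmemY ⟨(G.ends e).1, hends.1⟩).trans hiff).trans
        (hmemY ⟨(G.ends e).2, hends.2⟩).symm)
    by_cases hex : ∃ t, G.Crosses Y t
    · obtain ⟨t₁, ht₁⟩ := hex
      by_cases hex2 : ∃ t, G.Crosses Y t ∧ t ≠ t₁
      · obtain ⟨t₂, ht₂, hnet⟩ := hex2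
        refine G.cut_contra hG hmin Y hYsub b.val b.2 hbY t₁ t₂ ht₁ ?_
        intro e hc
        by_contra hne'
        push_neg at hne'
        obtain ⟨h₁, hS₁⟩ := hcrS t₁ ht₁
        obtain ⟨h₂, hS₂⟩ := hcrS t₂ ht₂
        obtain ⟨h₃, hS₃⟩ := hcrS e hc
        have hcard : ({Sum.inl ⟨t₁, h₁⟩, Sum.inl ⟨t₂, h₂⟩,
            Sum.inl ⟨e, h₃⟩} : Finset ({e : E // (G.ends e).1 ∈ V₂ ∧ (G.ends e).2 ∈ V₂} ⊕ Unit)).card = 3 := by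
          refine Finset.card_eq_three.mpr ⟨_, _, _, ?_, ?_, ?_, rfl⟩
          · simp only [ne_eq, Sum.inl.injEq, Subtype.mk.injEq]
            exact fun h => hnet h.symm
          · simp only [ne_eq, Sum.inl.injEq, Subtype.mk.injEq]
            exact fun h => hne'.1 h.symm
          · simp only [ne_eq, Sum.inl.injEq, Subtype.mk.injEq]
            exact fun h => hne'.2 h.symm
        have hsub : ({Sum.inl ⟨t₁, h₁⟩, Sum.inl ⟨t₂, h₂⟩, Sum.inl ⟨e, h₃⟩} : Finset _) ⊆ S := by
          intro x hx
          simp only [Finset.mem_insert, Finset.mem_singleton] at hx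
          rcases hx with rfl | rfl | rfl <;> assumption
        have := Finset.card_le_card hsub
        rw [hcard] at this
        omega
      · push_neg at hex2
        refine G.cut_contra hG hmin Y hYsub b.val b.2 hbY t₁ t₁ ht₁ ?_
        intro e hc
        exact Or.inl (hex2 e hc)
    · push_neg at hex
      exact G.empty_cut_contra hcut hsep he₁ he₂ hu₁ hu₂ hv₁ hv₂ hmin Y hYsub hv₁Y hv₂Y
        a.val ((hmemY a).mpr hPa) hex
  -- the case where v₁ and v₂ are on different sides of the cut
  have key2 : ∀ (P : ↥V₂ → Prop),
      (∀ e', e' ∉ (S : Set _) → (P (G₂.ends e').1 ↔ P (G₂.ends e').2)) →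
      P ⟨v₁, hv₁⟩ → ¬ P ⟨v₂, hv₂⟩ → Sum.inr () ∈ S → False := by
    intro P hP hPv₁ hPv₂ hinr
    set Y : Set V := {x | ∃ h : x ∈ V₂, P ⟨x, h⟩} with hYdef
    have hYsub : Y ⊆ V₂ := fun x hx => hx.1
    have hmemY : ∀ w : ↥V₂, w.val ∈ Y ↔ P w := by
      intro w
      constructor
      · rintro ⟨h, hw⟩; exact hw
      · intro hw; exact ⟨w.2, hw⟩
    have hv₁Y : v₁ ∈ Y := (hmemY ⟨v₁, hv₁⟩).mpr hPv₁
    have hv₂Y : v₂ ∉ Y := fun h => hPv₂ ((hmemY ⟨v₂, hv₂⟩).mp h)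
    have hu₁Y : u₁ ∉ Y := fun h => hu₁ (hYsub h)
    have hu₂Y : u₂ ∉ Y := fun h => hu₂ (hYsub h)
    have hce₁ : G.Crosses Y e₁ := by
      rcases he₁ with h | h <;> simp only [Multigraph.Crosses, h]
      · exact fun hi => hu₁Y (hi.mpr hv₁Y)
      · exact fun hi => hu₁Y (hi.mp hv₁Y)
    have hcrS : ∀ e, e ≠ e₁ → G.Crosses Y e →
        ∃ h, Sum.inl (⟨e, h⟩ : {e : E // (G.ends e).1 ∈ V₂ ∧ (G.ends e).2 ∈ V₂}) ∈ S := by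
      intro e hne₁ hc
      have hne₂ : e ≠ e₂ := by
        rintro rfl
        rcases he₂ with h | h <;> simp only [Multigraph.Crosses, h] at hc
        · exact hc (iff_of_false hu₂Y hv₂Y)
        · exact hc (iff_of_false hv₂Y hu₂Y)
      have hnV := hsep.2.2 e hne₁ hne₂
      simp only [Multigraph.Crosses, not_not] at hnV
      have hends : (G.ends e).1 ∈ V₂ ∧ (G.ends e).2 ∈ V₂ := by
        by_cases h1 : (G.ends e).1 ∈ Y
        · exact ⟨hYsub h1, hnV.mp (hYsub h1)⟩
        · have h2 : (G.ends e).2 ∈ Y := by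
            by_contra h2
            exact hc (iff_of_false h1 h2)
          exact ⟨hnV.mpr (hYsub h2), hYsub h2⟩
      refine ⟨hends, ?_⟩
      by_contra hnS
      have hiff := hP (Sum.inl ⟨e, hends⟩) (by simpa using hnS)
      exact hc (((hmemY ⟨(G.ends e).1, hends.1⟩).trans hiff).trans
        (hmemY ⟨(G.ends e).2, hends.2⟩).symm)
    by_cases hex2 : ∃ t, G.Crosses Y t ∧ t ≠ e₁
    · obtain ⟨t, hct, hnet⟩ := hex2
      refine G.cut_contra hG hmin Y hYsub v₂ hv₂ hv₂Y e₁ t hce₁ ?_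
      intro e hc
      by_contra hne'
      push_neg at hne'
      obtain ⟨h₂, hS₂⟩ := hcrS t hnet hct
      obtain ⟨h₃, hS₃⟩ := hcrS e hne'.1 hc
      have hcard : ({Sum.inr (), Sum.inl ⟨t, h₂⟩,
          Sum.inl ⟨e, h₃⟩} : Finset ({e : E // (G.ends e).1 ∈ V₂ ∧ (G.ends e).2 ∈ V₂} ⊕ Unit)).card = 3 := by
        refine Finset.card_eq_three.mpr ⟨_, _, _, ?_, ?_, ?_, rfl⟩
        · simp
        · simp
        · simp only [ne_eq, Sum.inl.injEq, Subtype.mk.injEq]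
          exact fun h => hne'.2 h.symm
      have hsub : ({Sum.inr (), Sum.inl ⟨t, h₂⟩, Sum.inl ⟨e, h₃⟩} : Finset _) ⊆ S := by
        intro x hx
        simp only [Finset.mem_insert, Finset.mem_singleton] at hx
        rcases hx with rfl | rfl | rfl <;> assumption
      have := Finset.card_le_card hsub
      rw [hcard] at this
      omega
    · push_neg at hex2
      refine G.cut_contra hG hmin Y hYsub v₂ hv₂ hv₂Y e₁ e₁ hce₁ ?_
      intro e hc
      exact Or.inl (hex2 e hc)
  by_cases h₁ : (⟨v₁, hv₁⟩ : ↥V₂) ∈ X' <;> by_cases h₂ : (⟨v₂, hv₂⟩ : ↥V₂) ∈ X'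
  · exact key (fun w => w ∉ X') (fun e' he' => not_iff_not.mpr (hclose e' he'))
      (not_not.mpr h₁) (not_not.mpr h₂) ⟨v, hvX'⟩ ⟨u, not_not.mpr huX'⟩
  · have hinr : Sum.inr () ∈ S := by
      by_contra h
      exact h₂ ((hclose (Sum.inr ()) (by simpa using h)).mp h₁)
    exact key2 (fun w => w ∈ X') hclose h₁ h₂ hinr
  · have hinr : Sum.inr () ∈ S := by
      by_contra h
      exact h₁ ((hclose (Sum.inr ()) (by simpa using h)).mpr h₂)
    exact key2 (fun w => w ∉ X') (fun e' he' => not_iff_not.mpr (hclose e' he'))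
      h₁ (not_not.mpr h₂) hinr
  · exact key (fun w => w ∈ X') hclose h₁ h₂ ⟨u, huX'⟩ ⟨v, hvX'⟩
end
end

section
/- Let G be a rich flow admissible graph and let 𝒫 be a set of pairs of adjacent edges of G with no two pairs strongly intersecting. For each pair p ∈ 𝒫 fix a common vertex a(p) of the two edges of p and introduce a new vertex b(p). Let H be the graph with vertex set V(G) ∪ {b(p) : p ∈ 𝒫} whose edges are: the edges a(p)b(p) for p ∈ 𝒫, together with one edge for each edge e of G, where in e each endpoint occurrence of a(p) for a pair p ∈ 𝒫 containing e is replaced by b(p) (an edge lying in two pairs p_1, p_2 has a(p_1) ≠ a(p_2) and both replacements are made). Then H is bridgeless. -/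
open Classical

noncomputable section

namespace Multigraph

variable {V E : Type}

/-- The endpoint `x` of the edge `e`, with every occurrence of `a p` for a
pair `p ∈ P` containing `e` replaced by the new vertex `b p` (realized as
`Sum.inr p`). -/
def replaceEnd (P : Set (Sym2 E)) (a : Sym2 E → V) (e : E) (x : V) : V ⊕ ↥P :=
  if h : ∃ p : ↥P, e ∈ (p : Sym2 E) ∧ a ↑p = x then Sum.inr h.choose else Sum.inl x

theorem replaceEnd_ne (P : Set (Sym2 E)) (a : Sym2 E → V) (e : E) {x y : V}
    (hxy : x ≠ y) : replaceEnd P a e x ≠ replaceEnd P a e y := by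
  unfold replaceEnd
  split_ifs with h₁ h₂ h₂ <;> intro h
  · injection h with h'
    exact hxy (by rw [← h₁.choose_spec.2, ← h₂.choose_spec.2, h'])
  · exact Sum.inr_ne_inl h
  · exact Sum.inl_ne_inr h
  · exact hxy (Sum.inl.inj h)

/-- The auxiliary graph `H` of Lemma 4 of the paper: for each pair `p ∈ P` a
new vertex `b p` (realized as `Sum.inr p`) is introduced together with a new
edge `a p — b p` (realized as `Sum.inl p`), and each edge `e` of `G` is kept
(realized as `Sum.inr e`) with each endpoint occurrence of `a p`, for a pair
`p ∈ P` containing `e`, replaced by `b p`. -/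
def auxGraph (G : Multigraph V E) (P : Set (Sym2 E)) (a : Sym2 E → V) :
    Multigraph (V ⊕ ↥P) (↥P ⊕ E) where
  ends := fun x =>
    match x with
    | .inl p => (Sum.inl (a ↑p), Sum.inr p)
    | .inr e => (replaceEnd P a e (G.ends e).1, replaceEnd P a e (G.ends e).2)
  no_loops := fun x =>
    match x with
    | .inl _ => fun h => Sum.inl_ne_inr h
    | .inr e => replaceEnd_ne P a e (G.no_loops e)

theorem ReachableAvoiding.symm' {G : Multigraph V E} {S : Set E} {u v : V}
    (h : G.ReachableAvoiding S u v) : G.ReachableAvoiding S v u :=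
  haveI : Std.Symm (G.adjVia S) := ⟨fun _ _ ⟨e, he, ho⟩ => ⟨e, he, ho.symm⟩⟩
  Std.Symm.symm (r := Relation.ReflTransGen (G.adjVia S)) _ _ h

theorem replaceEnd_cases (P : Set (Sym2 E)) (a : Sym2 E → V) (e : E) (x : V) :
    replaceEnd P a e x = Sum.inl x ∨
    ∃ q : ↥P, replaceEnd P a e x = Sum.inr q ∧ e ∈ (q : Sym2 E) ∧ a ↑q = x := by
  unfold replaceEnd
  split_ifs with h
  · exact Or.inr ⟨h.choose, rfl, h.choose_spec⟩
  · exact Or.inl rfl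

/-- From `Sum.inl x` we can reach `replaceEnd P a g x` in the auxiliary graph,
provided the possible connecting edge `Sum.inl q` is not forbidden. -/
theorem reach_replaceEnd (G : Multigraph V E) (P : Set (Sym2 E)) (a : Sym2 E → V)
    (S' : Set (↥P ⊕ E)) (g : E) (x : V)
    (h : ∀ q : ↥P, g ∈ (q : Sym2 E) → a ↑q = x → Sum.inl q ∉ S') :
    (G.auxGraph P a).ReachableAvoiding S' (Sum.inl x) (replaceEnd P a g x) := by
  rcases replaceEnd_cases P a g x with h1 | ⟨q, h1, hq, hx⟩
  · rw [h1]; exact Relation.ReflTransGen.refl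
  · rw [h1]
    refine Relation.ReflTransGen.single ⟨Sum.inl q, h q hq hx, Or.inl ?_⟩
    show (Sum.inl (a ↑q), Sum.inr q) = (Sum.inl x, Sum.inr q)
    rw [hx]

/-- Lifting a walk in `G` to a walk in the auxiliary graph between the
corresponding original vertices. -/
theorem lift_reach (G : Multigraph V E) (P : Set (Sym2 E)) (a : Sym2 E → V)
    (S : Set E) (S' : Set (↥P ⊕ E))
    (h1 : ∀ g, g ∉ S → Sum.inr g ∉ S')
    (h2 : ∀ q : ↥P, (∃ g, g ∉ S ∧ g ∈ (q : Sym2 E)) → Sum.inl q ∉ S')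
    {u v : V} (h : G.ReachableAvoiding S u v) :
    (G.auxGraph P a).ReachableAvoiding S' (Sum.inl u) (Sum.inl v) := by
  induction h with
  | refl => exact Relation.ReflTransGen.refl
  | @tail x y hux hstep ih =>
    obtain ⟨g, hg, hends⟩ := hstep
    refine ih.trans ?_
    have hx : (G.auxGraph P a).ReachableAvoiding S' (Sum.inl x) (replaceEnd P a g x) :=
      reach_replaceEnd G P a S' g x (fun q hq _ => h2 q ⟨g, hg, hq⟩)
    have hy : (G.auxGraph P a).ReachableAvoiding S' (Sum.inl y) (replaceEnd P a g y) :=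
      reach_replaceEnd G P a S' g y (fun q hq _ => h2 q ⟨g, hg, hq⟩)
    have hstep' : (G.auxGraph P a).adjVia S' (replaceEnd P a g x) (replaceEnd P a g y) := by
      refine ⟨Sum.inr g, h1 g hg, ?_⟩
      show (replaceEnd P a g (G.ends g).1, replaceEnd P a g (G.ends g).2)
          = (replaceEnd P a g x, replaceEnd P a g y) ∨
        (replaceEnd P a g (G.ends g).1, replaceEnd P a g (G.ends g).2)
          = (replaceEnd P a g y, replaceEnd P a g x)
      rcases hends with h' | h' <;> rw [h']
      · exact Or.inl rfl
      · exact Or.inr rfl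
    exact hx.trans ((Relation.ReflTransGen.single hstep').trans hy.symm')

end Multigraph

open Multigraph in
/-- Let `G` be rich flow admissible and let `P` be a set of
pairs of adjacent edges of `G`, no two of which are strongly intersecting.
For each `p ∈ P` fix a common vertex `a p` of the two edges of `p` and a new
vertex `b p`.  Then the auxiliary graph `H`, obtained by adding the edges
`a p — b p` and replacing in every edge of `G` each endpoint occurrence of
`a p` for a pair `p ∈ P` containing it by `b p`, is bridgeless. -/
theorem auxGraph_bridgeless {V E : Type} (G : Multigraph V E)
    (hG : G.RichFlowAdmissible) (P : Set (Sym2 E)) (a : Sym2 E → V)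
    (hP : ∀ p ∈ P, G.IsAdjacentPair p)
    (ha : ∀ p ∈ P, ∀ e ∈ p, G.incident (a p) e)
    (hSI : ∀ p ∈ P, ∀ q ∈ P, p ≠ q → ¬ G.StronglyIntersecting p q) :
    (G.auxGraph P a).Bridgeless := by
  intro x hbr
  apply hbr
  match x with
  | .inr e₀ =>
    -- the endpoints of a kept edge: lift the walk certifying `e₀` is no bridge
    set u₀ := (G.ends e₀).1
    set v₀ := (G.ends e₀).2
    have hGe₀ : G.ReachableAvoiding {e₀} u₀ v₀ := not_not.mp (hG.1 e₀)
    have hlift : (G.auxGraph P a).ReachableAvoiding {Sum.inr e₀} (Sum.inl u₀) (Sum.inl v₀) :=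
      lift_reach G P a {e₀} {Sum.inr e₀}
        (fun g hg hmem => hg (by
          have : (Sum.inr g : ↥P ⊕ E) = Sum.inr e₀ := hmem
          exact Set.mem_singleton_iff.mpr (Sum.inr.inj this)))
        (fun q _ hmem => Sum.inl_ne_inr (Set.mem_singleton_iff.mp hmem)) hGe₀
    have hu : (G.auxGraph P a).ReachableAvoiding {Sum.inr e₀} (Sum.inl u₀)
        (replaceEnd P a e₀ u₀) :=
      reach_replaceEnd G P a _ e₀ u₀
        (fun q _ _ hmem => Sum.inl_ne_inr (Set.mem_singleton_iff.mp hmem))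
    have hv : (G.auxGraph P a).ReachableAvoiding {Sum.inr e₀} (Sum.inl v₀)
        (replaceEnd P a e₀ v₀) :=
      reach_replaceEnd G P a _ e₀ v₀
        (fun q _ _ hmem => Sum.inl_ne_inr (Set.mem_singleton_iff.mp hmem))
    exact hu.symm'.trans (hlift.trans hv)
  | .inl pp =>
    -- the new edge `a p — b p`
    obtain ⟨e, f, hpef, hadj⟩ := hP ↑pp pp.2
    have hef : e ≠ f := hadj.1
    have hep : e ∈ (↑pp : Sym2 E) := by rw [hpef]; exact Sym2.mem_mk_left e f
    have hfp : f ∈ (↑pp : Sym2 E) := by rw [hpef]; exact Sym2.mem_mk_right e f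
    have hie : G.incident (a ↑pp) e := ha ↑pp pp.2 e hep
    have hif : G.incident (a ↑pp) f := ha ↑pp pp.2 f hfp
    -- uniqueness of the pair containing `e` at the vertex `a p`
    have huniq : ∀ q : ↥P, e ∈ (q : Sym2 E) → a ↑q = a ↑pp → q = pp := by
      intro q heq haq
      by_contra hne
      have hvalne : (↑pp : Sym2 E) ≠ ↑q := fun h => hne (Subtype.ext h.symm)
      refine hSI ↑pp pp.2 ↑q q.2 hvalne ⟨hvalne, ⟨e, ⟨hep, heq⟩, ?_⟩, ⟨a ↑pp, ?_⟩⟩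
      · rintro g ⟨hgp, hgq⟩
        rw [hpef] at hgp
        rcases Sym2.mem_iff.mp hgp with rfl | rfl
        · rfl
        · exfalso
          apply hvalne
          rw [hpef]
          exact ((Sym2.mem_and_mem_iff hef).mp ⟨heq, hgq⟩).symm
      · intro g hg
        rcases hg with hg | hg
        · exact ha ↑pp pp.2 g hg
        · have := ha ↑q q.2 g hg
          rwa [haq] at this
    have hre : replaceEnd P a e (a ↑pp) = Sum.inr pp := by
      rcases replaceEnd_cases P a e (a ↑pp) with h1 | ⟨q, h1, hq, hx⟩
      · exfalso
        unfold replaceEnd at h1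
        rw [dif_pos ⟨pp, hep, rfl⟩] at h1
        exact Sum.inr_ne_inl h1
      · rw [h1, huniq q hq hx]
    -- the other endpoint `w` of `e`
    obtain ⟨w, hw, hends⟩ :
        ∃ w, w ≠ a ↑pp ∧ (G.ends e = (a ↑pp, w) ∨ G.ends e = (w, a ↑pp)) := by
      rcases hie with h1 | h1
      · exact ⟨(G.ends e).2, fun h => G.no_loops e (h1.trans h.symm),
          Or.inl (by rw [← h1])⟩
      · exact ⟨(G.ends e).1, fun h => G.no_loops e (h.trans h1.symm),
          Or.inr (by rw [← h1])⟩
    set S' : Set (↥P ⊕ E) := {Sum.inl pp}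
    -- the edge `e` connects `b p` and `replaceEnd e w` in `H`
    have hstep : (G.auxGraph P a).adjVia S' (Sum.inr pp) (replaceEnd P a e w) := by
      refine ⟨Sum.inr e, fun h => Sum.inr_ne_inl (Set.mem_singleton_iff.mp h), ?_⟩
      show (replaceEnd P a e (G.ends e).1, replaceEnd P a e (G.ends e).2)
          = (Sum.inr pp, replaceEnd P a e w) ∨
        (replaceEnd P a e (G.ends e).1, replaceEnd P a e (G.ends e).2)
          = (replaceEnd P a e w, Sum.inr pp)
      rcases hends with h' | h' <;> rw [h']
      · exact Or.inl (by rw [hre])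
      · exact Or.inr (by rw [hre])
    -- from `replaceEnd e w` we can reach `Sum.inl w`
    have hwreach : (G.auxGraph P a).ReachableAvoiding S' (Sum.inl w) (replaceEnd P a e w) :=
      reach_replaceEnd G P a S' e w (by
        intro q _ haq hmem
        have : q = pp := Sum.inl.inj (Set.mem_singleton_iff.mp hmem)
        exact hw (by rw [← haq, this]))
    -- `{e, f}` is not a 2-edge-cut, so `w` is reachable from `a p` avoiding `e, f`
    have hG2 : G.ReachableAvoiding {e, f} w (a ↑pp) := by
      have h0 : G.ReachableAvoiding ∅ w (a ↑pp) := by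
        refine Relation.ReflTransGen.single ⟨e, Set.notMem_empty e, ?_⟩
        rcases hends with h' | h'
        · exact Or.inr h'
        · exact Or.inl h'
      by_contra hcon
      exact hG.2 e f ⟨hef, hG.1 e, hG.1 f, w, a ↑pp, h0, hcon⟩ ⟨a ↑pp, hie, hif⟩
    -- lift that walk to `H`
    have hlift : (G.auxGraph P a).ReachableAvoiding S' (Sum.inl w) (Sum.inl (a ↑pp)) :=
      lift_reach G P a {e, f} S'
        (fun g _ hmem => Sum.inr_ne_inl (Set.mem_singleton_iff.mp hmem))
        (by
          rintro q ⟨g, hgS, hgq⟩ hmem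
          have hq : q = pp := Sum.inl.inj (Set.mem_singleton_iff.mp hmem)
          apply hgS
          rw [hq, hpef] at hgq
          rcases Sym2.mem_iff.mp hgq with rfl | rfl
          · exact Set.mem_insert g {f}
          · exact Set.mem_insert_of_mem e rfl)
        hG2
    -- assemble: a p ~ w ~ replaceEnd e w ~ b p
    show (G.auxGraph P a).ReachableAvoiding S' (Sum.inl (a ↑pp)) (Sum.inr pp)
    exact (hlift.symm'.trans hwreach).trans (Multigraph.ReachableAvoiding.symm' (Relation.ReflTransGen.single hstep))
end
end

section
/- Every rich flow admissible graph G admits a rich k-flow for some integer k; that is, G is bridgeless and no two edges forming a 2-edge-cut of G are incident with a common vertex if and only if G admits a rich k-flow for some integer k. -/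
open Classical

noncomputable section

namespace RichAux

open Multigraph

variable {V E : Type}

/-- The excess of `φ` at a vertex. -/
def excess [Fintype E] (G : Multigraph V E) (φ : E → ℤ) (w : V) : ℤ :=
  (∑ e : E, if (G.ends e).2 = w then φ e else 0) -
    ∑ e : E, if (G.ends e).1 = w then φ e else 0

lemma isFlow_iff [Fintype E] (G : Multigraph V E) (φ : E → ℤ) :
    G.IsFlow φ ↔ ∀ w, excess G φ w = 0 := by
  unfold Multigraph.IsFlow excess
  constructor
  · intro h w; rw [h w, sub_self]
  · intro h w; have := h w; omega

lemma sum_ite_ite [Fintype E] (P : E → Prop) [DecidablePred P] (g : E) (x : ℤ) :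
    (∑ e : E, if P e then (if e = g then x else 0) else 0) = if P g then x else 0 := by
  classical
  have h : ∀ e : E, (if P e then (if e = g then x else 0) else 0)
      = if e = g then (if P g then x else 0) else 0 := by
    intro e; by_cases h : e = g <;> simp [h]
  rw [Finset.sum_congr rfl (fun e _ => h e)]
  simp

lemma sum_ite_add [Fintype E] (P : E → Prop) [DecidablePred P] (φ ψ : E → ℤ) :
    (∑ e : E, if P e then φ e + ψ e else 0) =
      (∑ e : E, if P e then φ e else 0) + ∑ e : E, if P e then ψ e else 0 := by
  rw [← Finset.sum_add_distrib]
  exact Finset.sum_congr rfl fun e _ => by by_cases h : P e <;> simp [h]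

lemma sum_ite_sub [Fintype E] (P : E → Prop) [DecidablePred P] (φ ψ : E → ℤ) :
    (∑ e : E, if P e then φ e - ψ e else 0) =
      (∑ e : E, if P e then φ e else 0) - ∑ e : E, if P e then ψ e else 0 := by
  rw [← Finset.sum_sub_distrib]
  exact Finset.sum_congr rfl fun e _ => by by_cases h : P e <;> simp [h]

lemma excess_add [Fintype E] (G : Multigraph V E) (φ ψ : E → ℤ) (w : V) :
    excess G (fun e => φ e + ψ e) w = excess G φ w + excess G ψ w := by
  unfold excess
  rw [sum_ite_add, sum_ite_add]; ring

lemma excess_sub [Fintype E] (G : Multigraph V E) (φ ψ : E → ℤ) (w : V) :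
    excess G (fun e => φ e - ψ e) w = excess G φ w - excess G ψ w := by
  unfold excess
  rw [sum_ite_sub, sum_ite_sub]; ring

lemma excess_indicator [Fintype E] (G : Multigraph V E) (g : E) (x : ℤ) (w : V) :
    excess G (fun e => if e = g then x else 0) w =
      (if (G.ends g).2 = w then x else 0) - (if (G.ends g).1 = w then x else 0) := by
  unfold excess
  rw [sum_ite_ite, sum_ite_ite]

/-- From a walk avoiding `S` we obtain a pseudo-flow supported off `S` with
excess `+1` at the end and `-1` at the start. -/
lemma exists_pseudoflow [Fintype E] (G : Multigraph V E) (S : Set E) {u v : V}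
    (h : G.ReachableAvoiding S u v) :
    ∃ ψ : E → ℤ, (∀ f ∈ S, ψ f = 0) ∧
      ∀ w, excess G ψ w = (if v = w then 1 else 0) - (if u = w then 1 else 0) := by
  classical
  induction h with
  | refl => exact ⟨0, fun _ _ => rfl, fun w => by simp [excess]⟩
  | @tail b c hab hbc ih =>
    obtain ⟨ψ, hS, hex⟩ := ih
    obtain ⟨g, hgS, hg⟩ := hbc
    set σ : ℤ := if G.ends g = (b, c) then 1 else -1 with hσ
    refine ⟨fun x => ψ x + (if x = g then σ else 0), ?_, ?_⟩
    · intro f hf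
      have : f ≠ g := fun h' => hgS (h' ▸ hf)
      simp [hS f hf, this]
    · intro w
      rw [excess_add, hex, excess_indicator]
      have hind : (if (G.ends g).2 = w then σ else 0) - (if (G.ends g).1 = w then σ else 0)
          = (if c = w then 1 else 0) - (if b = w then 1 else 0) := by
        rcases hg with hg | hg
        · have h1 : (G.ends g).1 = b := by rw [hg]
          have h2 : (G.ends g).2 = c := by rw [hg]
          have hσ1 : σ = 1 := by rw [hσ, if_pos hg]
          rw [h1, h2, hσ1]
        · have h1 : (G.ends g).1 = c := by rw [hg]
          have h2 : (G.ends g).2 = b := by rw [hg]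
          have hσ1 : σ = -1 := by
            rw [hσ, if_neg]
            intro h'
            have hb : b = c := congrArg Prod.fst (h'.symm.trans hg)
            exact G.no_loops g (by rw [hg, ← hb])
          rw [h1, h2, hσ1]
          split_ifs <;> ring
      rw [hind]; ring

/-- A non-bridge edge yields an integer circulation with value `-1` on it,
vanishing on all other edges of `S`. -/
lemma exists_circulation [Fintype E] (G : Multigraph V E) (S : Set E) (e : E) (he : e ∈ S)
    (h : G.ReachableAvoiding S (G.ends e).1 (G.ends e).2) :
    ∃ θ : E → ℤ, G.IsFlow θ ∧ θ e = -1 ∧ ∀ f ∈ S, f ≠ e → θ f = 0 := by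
  classical
  obtain ⟨ψ, hS, hex⟩ := exists_pseudoflow G S h
  refine ⟨fun x => ψ x - (if x = e then 1 else 0), ?_, by simp [hS e he], ?_⟩
  · rw [isFlow_iff]
    intro w
    rw [excess_sub, hex, excess_indicator]
    ring
  · intro f hf hfe
    simp [hS f hf, hfe]

/-- Summing the flow condition over a vertex set: flows across any cut balance. -/
lemma flow_cut [Fintype V] [Fintype E] (G : Multigraph V E) {φ : E → ℤ} (hφ : G.IsFlow φ)
    (p : V → Prop) [DecidablePred p] :
    (∑ e : E, if p (G.ends e).2 then φ e else 0) =
      ∑ e : E, if p (G.ends e).1 then φ e else 0 := by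
  classical
  have h1 : ∀ q : E → V, (∑ e : E, if p (q e) then φ e else 0)
      = ∑ v ∈ Finset.univ.filter p, ∑ e : E, if q e = v then φ e else 0 := by
    intro q
    rw [Finset.sum_comm]
    refine Finset.sum_congr rfl fun e _ => ?_
    rw [Finset.sum_ite_eq]
    simp
  rw [h1 (fun e => (G.ends e).2), h1 (fun e => (G.ends e).1)]
  exact Finset.sum_congr rfl fun v _ => hφ v

/-- A nowhere-zero flow has no bridges. -/
lemma not_bridge_of_flow [Fintype V] [Fintype E] (G : Multigraph V E) {φ : E → ℤ}
    (hφ : G.IsFlow φ) (e : E) (hne : φ e ≠ 0) : ¬ G.IsBridge e := by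
  classical
  intro hb
  set p : V → Prop := fun w => G.ReachableAvoiding {e} (G.ends e).1 w with hp
  have hstep : ∀ g : E, g ≠ e → ∀ a b : V,
      (G.ends g = (a, b) ∨ G.ends g = (b, a)) → p a → p b := by
    intro g hg a b hab ha
    exact ha.tail ⟨g, by simp [hg], hab⟩
  have hclosed : ∀ g : E, g ≠ e → (p (G.ends g).1 ↔ p (G.ends g).2) := by
    intro g hg
    constructor
    · exact hstep g hg _ _ (Or.inl (Prod.mk.eta (p := G.ends g)).symm)
    · exact hstep g hg _ _ (Or.inr (Prod.mk.eta (p := G.ends g)).symm)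
  have hcut := flow_cut G hφ p
  have hsum : (∑ g : E, ((if p (G.ends g).2 then φ g else 0)
      - (if p (G.ends g).1 then φ g else 0))) = 0 := by
    rw [Finset.sum_sub_distrib, hcut, sub_self]
  have hsingle : ∀ g : E, g ∈ Finset.univ → g ≠ e →
      ((if p (G.ends g).2 then φ g else 0) - (if p (G.ends g).1 then φ g else 0)) = 0 := by
    intro g _ hg
    rcases hclosed g hg with h
    by_cases h1 : p (G.ends g).1
    · rw [if_pos h1, if_pos (h.mp h1), sub_self]
    · rw [if_neg h1, if_neg (fun h2 => h1 (h.mpr h2)), sub_self]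
  have he' : (if p (G.ends e).2 then φ e else 0) - (if p (G.ends e).1 then φ e else 0) = 0 := by
    rw [← Finset.sum_eq_single e hsingle (fun h => absurd (Finset.mem_univ e) h)]
    exact hsum
  have hpe1 : p (G.ends e).1 := Relation.ReflTransGen.refl
  have hpe2 : ¬ p (G.ends e).2 := hb
  rw [if_pos hpe1, if_neg hpe2] at he'
  omega

/-- Avoiding finitely many integral hyperplanes. -/
lemma avoid_hyperplanes {ι : Type} [Fintype ι] :
    ∀ l : List (ι → ℤ), (∀ w ∈ l, ∃ i, w i ≠ 0) →
      ∃ c : ι → ℤ, ∀ w ∈ l, (∑ i, w i * c i) ≠ 0 := by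
  intro l
  induction l with
  | nil => exact fun _ => ⟨0, by simp⟩
  | cons w l ih =>
    intro h
    obtain ⟨c, hc⟩ := ih (fun w' hw' => h w' (List.mem_cons_of_mem _ hw'))
    set t : ℤ := 1 + ((w :: l).map (fun w' => |∑ i, w' i * w i|)).sum with ht
    have hsnn : 0 ≤ ((w :: l).map (fun w' => |∑ i, w' i * w i|)).sum := by
      refine List.sum_nonneg fun x hx => ?_
      obtain ⟨y, _, rfl⟩ := List.mem_map.mp hx
      exact abs_nonneg _
    have htpos0 : 0 < t := by rw [ht]; linarith
    have htpos : ∀ w' ∈ w :: l, |∑ i, w' i * w i| < t := by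
      intro w' hw'
      have h1 : |∑ i, w' i * w i| ≤ ((w :: l).map (fun w' => |∑ i, w' i * w i|)).sum := by
        refine List.single_le_sum (fun x hx => ?_) _ (List.mem_map_of_mem hw')
        obtain ⟨y, _, rfl⟩ := List.mem_map.mp hx
        exact abs_nonneg _
      rw [ht]; linarith
    have key : ∀ a b : ℤ, (a ≠ 0 ∨ b ≠ 0) → |b| < t → t * a + b ≠ 0 := by
      intro a b hab hb habs
      rcases eq_or_ne a 0 with rfl | ha
      · rw [mul_zero, zero_add] at habs
        rcases hab with h' | h'
        · exact h' rfl
        · exact h' habs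
      · have h1 : 1 ≤ |a| := Int.one_le_abs ha
        have h2 : t * a = -b := by linarith
        have h3 : |t * a| = t * |a| := by rw [abs_mul, abs_of_pos htpos0]
        have h4 : t * 1 ≤ t * |a| := by nlinarith
        have h5 : |t * a| = |b| := by rw [h2, abs_neg]
        linarith
    refine ⟨fun i => t * c i + w i, ?_⟩
    intro w' hw'
    have hexp : (∑ i, w' i * (t * c i + w i))
        = t * (∑ i, w' i * c i) + ∑ i, w' i * w i := by
      rw [Finset.mul_sum, ← Finset.sum_add_distrib]
      exact Finset.sum_congr rfl fun i _ => by ring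
    rw [hexp]
    refine key _ _ ?_ (htpos w' hw')
    rcases List.mem_cons.mp hw' with rfl | hmem
    · right
      obtain ⟨i0, hi0⟩ := h w' List.mem_cons_self
      have hposb : 0 < ∑ i, w' i * w' i :=
        Finset.sum_pos' (fun i _ => mul_self_nonneg _)
          ⟨i0, Finset.mem_univ _, mul_self_pos.mpr hi0⟩
      exact ne_of_gt hposb
    · exact Or.inl (hc w' hmem)

/-- Integer linear combinations of flows are flows. -/
lemma isFlow_sum [Fintype E] {ι : Type} [Fintype ι] (G : Multigraph V E)
    (θ : ι → E → ℤ) (hθ : ∀ i, G.IsFlow (θ i)) (c : ι → ℤ) :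
    G.IsFlow (fun e => ∑ i, θ i e * c i) := by
  classical
  intro v
  have key : ∀ (P : E → Prop) (_ : DecidablePred P),
      (∑ e : E, if P e then (∑ i, θ i e * c i) else 0)
        = ∑ i, (∑ e : E, if P e then θ i e else 0) * c i := by
    intro P _
    have h1 : ∀ e : E, (if P e then (∑ i, θ i e * c i) else 0)
        = ∑ i, if P e then θ i e * c i else 0 := by
      intro e; by_cases h : P e <;> simp [h]
    rw [Finset.sum_congr rfl fun e _ => h1 e, Finset.sum_comm]
    refine Finset.sum_congr rfl fun i _ => ?_
    rw [Finset.sum_mul]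
    refine Finset.sum_congr rfl fun e _ => ?_
    by_cases h : P e <;> simp [h]
  rw [key _ inferInstance, key _ inferInstance]
  exact Finset.sum_congr rfl fun i _ => by rw [hθ i v]

end RichAux

open Multigraph in
/-- A graph admits a rich `k`-flow for some integer `k` if
and only if it is rich flow admissible, i.e. bridgeless with no two edges of a
2-edge-cut incident with a common vertex. -/
theorem richFlowAdmissible_iff_exists_richFlow {V E : Type} [Fintype V] [Fintype E]
    (G : Multigraph V E) :
    G.RichFlowAdmissible ↔ ∃ (k : ℤ) (φ : E → ℤ), G.IsRichFlow k φ := by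
  classical
  constructor
  · rintro ⟨hbl, hcut⟩
    have h1 : ∀ e : E, ∃ θ : E → ℤ, G.IsFlow θ ∧ θ e = -1 := by
      intro e
      have hr : G.ReachableAvoiding {e} (G.ends e).1 (G.ends e).2 := not_not.mp (hbl e)
      obtain ⟨θ, hθ, he, -⟩ := RichAux.exists_circulation G {e} e rfl hr
      exact ⟨θ, hθ, he⟩
    have h2 : ∀ p : E × E, ∃ θ : E → ℤ, G.IsFlow θ ∧
        (G.Adjacent p.1 p.2 → θ p.1 = -1 ∧ θ p.2 = 0) := by
      rintro ⟨e, f⟩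
      by_cases hadj : G.Adjacent e f
      · have hre : G.ReachableAvoiding ∅ (G.ends e).1 (G.ends e).2 :=
          Relation.ReflTransGen.single ⟨e, Set.notMem_empty e, Or.inl (Prod.mk.eta).symm⟩
        have hr2 : G.ReachableAvoiding {e, f} (G.ends e).1 (G.ends e).2 := by
          by_contra hno
          exact hcut e f ⟨hadj.1, hbl e, hbl f, _, _, hre, hno⟩ hadj.2
        obtain ⟨θ, hθ, he, hz⟩ := RichAux.exists_circulation G {e, f} e (by simp) hr2
        exact ⟨θ, hθ, fun _ => ⟨he, hz f (by simp) (fun h' => hadj.1 h'.symm)⟩⟩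
      · exact ⟨0, fun v => by simp, fun h' => absurd h' hadj⟩
    choose θ1 hθ1f hθ1v using h1
    choose θ2 hθ2f hθ2v using h2
    set Θ : E ⊕ (E × E) → E → ℤ := Sum.elim θ1 θ2 with hΘdef
    have hΘ : ∀ i, G.IsFlow (Θ i) := by rintro (e | p); exacts [hθ1f e, hθ2f p]
    set A : Finset (E × E) := Finset.univ.filter (fun p : E × E => G.Adjacent p.1 p.2) with hA
    set l : List ((E ⊕ (E × E)) → ℤ) :=
      (Finset.univ.toList.map (fun e (i : E ⊕ (E × E)) => Θ i e))
      ++ ((A.toList.map (fun p (i : E ⊕ (E × E)) => Θ i p.1 - Θ i p.2))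
      ++ (A.toList.map (fun p (i : E ⊕ (E × E)) => Θ i p.1 + Θ i p.2))) with hl
    have hlnz : ∀ w ∈ l, ∃ i, w i ≠ 0 := by
      intro w hw
      rw [hl] at hw
      rcases List.mem_append.mp hw with hw1 | hw2
      · obtain ⟨e, -, rfl⟩ := List.mem_map.mp hw1
        exact ⟨Sum.inl e, by simp [hΘdef, hθ1v e]⟩
      · rcases List.mem_append.mp hw2 with hw3 | hw3
        · obtain ⟨q, hq, rfl⟩ := List.mem_map.mp hw3
          have hadj : G.Adjacent q.1 q.2 := (Finset.mem_filter.mp (Finset.mem_toList.mp hq)).2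
          exact ⟨Sum.inr q, by simp [hΘdef, (hθ2v q hadj).1, (hθ2v q hadj).2]⟩
        · obtain ⟨q, hq, rfl⟩ := List.mem_map.mp hw3
          have hadj : G.Adjacent q.1 q.2 := (Finset.mem_filter.mp (Finset.mem_toList.mp hq)).2
          exact ⟨Sum.inr q, by simp [hΘdef, (hθ2v q hadj).1, (hθ2v q hadj).2]⟩
    obtain ⟨c, hc⟩ := RichAux.avoid_hyperplanes l hlnz
    set φ : E → ℤ := fun e => ∑ i, Θ i e * c i with hφdef
    have hflow : G.IsFlow φ := RichAux.isFlow_sum G Θ hΘ c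
    have hnz : ∀ e, φ e ≠ 0 := by
      intro e
      refine hc (fun i => Θ i e) ?_
      rw [hl]
      exact List.mem_append_left _
        (List.mem_map.mpr ⟨e, Finset.mem_toList.mpr (Finset.mem_univ e), rfl⟩)
    have hdiff : ∀ e f, G.Adjacent e f → φ e - φ f ≠ 0 := by
      intro e f hadj
      have hm : (fun i => Θ i e - Θ i f) ∈ l := by
        rw [hl]
        refine List.mem_append_right _ (List.mem_append_left _ (List.mem_map.mpr ?_))
        exact ⟨(e, f), Finset.mem_toList.mpr (Finset.mem_filter.mpr ⟨Finset.mem_univ _, hadj⟩), rfl⟩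
      have := hc _ hm
      have heq : (∑ i, (Θ i e - Θ i f) * c i) = φ e - φ f := by
        rw [hφdef, ← Finset.sum_sub_distrib]
        exact Finset.sum_congr rfl fun i _ => by ring
      rw [heq] at this
      exact this
    have hsum2 : ∀ e f, G.Adjacent e f → φ e + φ f ≠ 0 := by
      intro e f hadj
      have hm : (fun i => Θ i e + Θ i f) ∈ l := by
        rw [hl]
        refine List.mem_append_right _ (List.mem_append_right _ (List.mem_map.mpr ?_))
        exact ⟨(e, f), Finset.mem_toList.mpr (Finset.mem_filter.mpr ⟨Finset.mem_univ _, hadj⟩), rfl⟩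
      have := hc _ hm
      have heq : (∑ i, (Θ i e + Θ i f) * c i) = φ e + φ f := by
        rw [hφdef, ← Finset.sum_add_distrib]
        exact Finset.sum_congr rfl fun i _ => by ring
      rw [heq] at this
      exact this
    refine ⟨1 + ∑ e, |φ e|, φ, hflow, hnz, ?_, ?_⟩
    · intro e
      have h1 : |φ e| ≤ ∑ x, |φ x| :=
        Finset.single_le_sum (f := fun x => |φ x|) (fun i _ => abs_nonneg _) (Finset.mem_univ e)
      linarith
    · intro e f hadj habs
      rcases abs_eq_abs.mp habs with h' | h'
      · exact hdiff e f hadj (by linarith)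
      · exact hsum2 e f hadj (by linarith)
  · rintro ⟨k, φ, hφ, hnz, -, hdist⟩
    constructor
    · intro e
      exact RichAux.not_bridge_of_flow G hφ e (hnz e)
    · rintro e f ⟨hef, -, -, u, v, huv, hnr⟩ ⟨v0, hv0e, hv0f⟩
      have hadj : G.Adjacent e f := ⟨hef, v0, hv0e, hv0f⟩
      set p : V → Prop := fun w => G.ReachableAvoiding {e, f} u w with hp
      have hstep2 : ∀ g : E, (p (G.ends g).1 ↔ p (G.ends g).2) → ∀ a b : V,
          (G.ends g = (a, b) ∨ G.ends g = (b, a)) → p a → p b := by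
        intro g hiff a b hab ha
        rcases hab with h' | h'
        · have ha1 : (G.ends g).1 = a := by rw [h']
          have ha2 : (G.ends g).2 = b := by rw [h']
          rw [ha1, ha2] at hiff; exact hiff.mp ha
        · have ha1 : (G.ends g).1 = b := by rw [h']
          have ha2 : (G.ends g).2 = a := by rw [h']
          rw [ha1, ha2] at hiff; exact hiff.mpr ha
      have hiffout : ∀ g : E, g ∉ ({e, f} : Set E) → (p (G.ends g).1 ↔ p (G.ends g).2) := by
        intro g hg
        constructor
        · intro h'; exact h'.tail ⟨g, hg, Or.inl (Prod.mk.eta).symm⟩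
        · intro h'; exact h'.tail ⟨g, hg, Or.inr (Prod.mk.eta).symm⟩
      have hcutsum := RichAux.flow_cut G hφ p
      set d : E → ℤ := fun g => (if p (G.ends g).2 then φ g else 0)
          - (if p (G.ends g).1 then φ g else 0) with hd
      have hsum : (∑ g : E, d g) = 0 := by
        rw [hd]
        rw [Finset.sum_sub_distrib, hcutsum, sub_self]
      have hzero : ∀ g ∈ Finset.univ, g ∉ ({e, f} : Finset E) → d g = 0 := by
        intro g _ hg
        have hg' : g ∉ ({e, f} : Set E) := by
          simp only [Finset.mem_insert, Finset.mem_singleton] at hg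
          simp only [Set.mem_insert_iff, Set.mem_singleton_iff]
          exact hg
        have hiff := hiffout g hg'
        rw [hd]
        by_cases h' : p (G.ends g).1
        · simp [h', hiff.mp h']
        · have h2' : ¬ p (G.ends g).2 := fun h2 => h' (hiff.mpr h2)
          simp [h', h2']
      have hef2 : d e + d f = 0 := by
        have hss := Finset.sum_subset (Finset.subset_univ ({e, f} : Finset E)) hzero
        rw [Finset.sum_pair hef] at hss
        rw [hss, hsum]
      have key : ∀ g : E, (d g = 0 ∧ (p (G.ends g).1 ↔ p (G.ends g).2)) ∨ |d g| = |φ g| := by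
        intro g
        rw [hd]
        by_cases h1' : p (G.ends g).1 <;> by_cases h2' : p (G.ends g).2 <;>
          simp [h1', h2', abs_neg]
      rcases key e with ⟨hde, hiffe⟩ | hde
      · rcases key f with ⟨hdf, hifff⟩ | hdf
        · -- closure: p is preserved along all edges, contradiction with hnr
          have hiffall : ∀ g : E, (p (G.ends g).1 ↔ p (G.ends g).2) := by
            intro g
            by_cases hg : g ∈ ({e, f} : Set E)
            · rcases hg with rfl | hg
              · exact hiffe
              · rw [Set.mem_singleton_iff] at hg; subst hg; exact hifff
            · exact hiffout g hg
          have hreach : ∀ w, G.ReachableAvoiding ∅ u w → p w := by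
            intro w hw
            induction hw with
            | refl => exact Relation.ReflTransGen.refl
            | @tail b c hb hbc ih =>
              obtain ⟨g, -, hg⟩ := hbc
              exact hstep2 g (hiffall g) b c hg ih
          exact hnr (hreach v huv)
        · rw [hde, zero_add] at hef2
          rw [hef2] at hdf
          exact hnz f (abs_eq_zero.mp hdf.symm)
      · rcases key f with ⟨hdf, hifff⟩ | hdf
        · rw [hdf, add_zero] at hef2
          rw [hef2] at hde
          exact hnz e (abs_eq_zero.mp hde.symm)
        · have : |φ e| = |φ f| := by
            rw [← hde, ← hdf]
            have : d e = -d f := by linarith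
            rw [this, abs_neg]
          exact hdist e f hadj this
end
end
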